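/- arXiv:2405.01183 — 7 statements merged into one kernel-verified Lean document; each statement's English description precedes it below -/
import Mathlib

section
/- Let A be an ℓ×n integer matrix, b an integer vector of dimension ℓ, and let Δ ≥ 1 be an upper bound on the absolute values of all subdeterminants of A. If the system A x ≤ b has a solution x ∈ ℚ^n, then it has a rational solution of the form (1/a)·E b, where E is an n×ℓ integer matrix with all entries of absolute value at most Δ, and a is a nonzero integer with |a| ≤ Δ. -/
/-!
Among the feasible points choose one, `x`, whose set of tight constraints is maximal. If a row of
`A` were not in the span of the tight rows, some direction `d` would be orthogonal to all tight
rows but increase that row; moving from `x` along `d` until a new constraint becomes tight would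
contradict maximality. So the tight rows span the row space of `A`: choose linearly independent
tight rows `f` and columns `g` such that `S = A.submatrix f g` is invertible. The point supported
on `g` that solves `S y = b ∘ f`, namely `y = adj(S) (b ∘ f) / det S`, has the same image as `x`
under every row of `A`, because each row is a combination of the rows `f`. Finally `det S` and the
entries of `adj(S)` are subdeterminants of `A` up to sign, hence bounded by `Δ`.
-/

/-- All absolute values of subdeterminants of `A` are bounded by `Δ`. -/
def SubdetBound {ℓ n : ℕ} (A : Matrix (Fin ℓ) (Fin n) ℤ) (Δ : ℤ) : Prop :=
  ∀ (k : ℕ) (f : Fin k → Fin ℓ) (g : Fin k → Fin n),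
    Function.Injective f → Function.Injective g →
      |(A.submatrix f g).det| ≤ Δ

open Matrix Submodule Function

theorem exists_fin_linearIndependent_span_eq {ι V : Type*} (K : Type*) [Finite ι] [DivisionRing K]
    [AddCommGroup V] [Module K V] (v : ι → V) (s : Set ι) :
    ∃ (k : ℕ) (f : Fin k → ι), Injective f ∧ (∀ q, f q ∈ s) ∧
      LinearIndependent K (v ∘ f) ∧ span K (Set.range (v ∘ f)) = span K (v '' s) := by
  obtain ⟨κ, a, ha, hspan, hli⟩ := exists_linearIndependent' K (v ∘ ((↑) : s → ι))
  have : Finite κ := Finite.of_injective a ha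
  set e := Finite.equivFin κ
  refine ⟨_, fun q => a (e.symm q), Subtype.val_injective.comp (ha.comp e.symm.injective),
    fun q => (a _).2, hli.comp _ e.symm.injective, ?_⟩
  change span K (Set.range (((v ∘ Subtype.val) ∘ a) ∘ e.symm)) = _
  rw [EquivLike.range_comp, hspan, Set.range_comp, Subtype.range_coe]

namespace Matrix

variable {ι σ K : Type*} [Fintype σ]

section Feasibility

variable [Field K] [LinearOrder K] [IsStrictOrderedRing K]

def tightRows (B : Matrix ι σ K) (c : ι → K) (x : σ → K) : Set ι :=
  {i | (B *ᵥ x) i = c i}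

theorem exists_dotProduct_eq_zero_of_notMem {W : Submodule K (σ → K)} {v : σ → K}
    (hv : v ∉ W) : ∃ d, (∀ w ∈ W, w ⬝ᵥ d = 0) ∧ 0 < v ⬝ᵥ d := by
  classical
  obtain ⟨φ, hφv, hφW⟩ := exists_dual_map_eq_bot_of_notMem hv inferInstance
  set d := (dotProductEquiv K σ).symm φ
  have hφ : ∀ w, φ w = w ⬝ᵥ d := fun w => by
    conv_lhs => rw [← (dotProductEquiv K σ).apply_symm_apply φ]
    exact dotProduct_comm _ _
  have hφW' : ∀ w ∈ W, φ w = 0 := fun w hw => (mem_bot K).1 (hφW ▸ mem_map_of_mem hw)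
  rcases hφv.lt_or_gt with hneg | hpos
  · exact ⟨-d, fun w hw => by simp [← hφ, hφW' w hw], by simpa [← hφ] using hneg⟩
  · exact ⟨d, fun w hw => by rw [← hφ, hφW' w hw], by rwa [← hφ]⟩

/-- The step length `t` is given by the ratio test of the simplex method. -/
theorem exists_mulVec_add_smul_le_and_eq [Fintype ι] {B : Matrix ι σ K} {c : ι → K}
    {x d : σ → K} (hx : B *ᵥ x ≤ c) (hd : ∃ i, 0 < (B *ᵥ d) i) :
    ∃ t : K, B *ᵥ (x + t • d) ≤ c ∧ ∃ i, 0 < (B *ᵥ d) i ∧ (B *ᵥ (x + t • d)) i = c i := by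
  classical
  have hB : ∀ t j, (B *ᵥ (x + t • d)) j = (B *ᵥ x) j + t * (B *ᵥ d) j := fun t j => by
    simp [mulVec_add, mulVec_smul]
  set ratio := fun j => (c j - (B *ᵥ x) j) / (B *ᵥ d) j
  obtain ⟨i, hi, hmin⟩ := ({j | 0 < (B *ᵥ d) j} : Finset ι).exists_min_image ratio
    (by simpa [Finset.filter_nonempty_iff] using hd)
  rw [Finset.mem_filter_univ] at hi
  refine ⟨ratio i, fun j => ?_, i, hi, ?_⟩
  · rw [hB]
    rcases lt_or_ge 0 ((B *ᵥ d) j) with hj | hj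
    · have := hmin j (by simpa using hj)
      rw [le_div_iff₀ hj] at this
      linarith
    · have : ratio i * (B *ᵥ d) j ≤ 0 :=
        mul_nonpos_of_nonneg_of_nonpos (div_nonneg (sub_nonneg.2 (hx i)) hi.le) hj
      linarith [hx j]
  · rw [hB, div_mul_cancel₀ _ hi.ne']
    ring

theorem exists_tightRows_ssuperset [Fintype ι] {B : Matrix ι σ K} {c : ι → K} {x : σ → K}
    (hx : B *ᵥ x ≤ c) {i : ι} (hi : B i ∉ span K (B '' tightRows B c x)) :
    ∃ y, B *ᵥ y ≤ c ∧ tightRows B c x ⊂ tightRows B c y := by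
  obtain ⟨d, hd0, hdi⟩ := exists_dotProduct_eq_zero_of_notMem hi
  have hdx : ∀ j ∈ tightRows B c x, (B *ᵥ d) j = 0 := fun j hj =>
    hd0 _ (subset_span (Set.mem_image_of_mem B hj))
  obtain ⟨t, hyc, j, hjd, hjy⟩ := exists_mulVec_add_smul_le_and_eq hx ⟨i, hdi⟩
  refine ⟨x + t • d, hyc, (Set.ssubset_iff_of_subset fun j' hj' => ?_).2 ⟨j, hjy, fun hjx => ?_⟩⟩
  · simp only [tightRows, Set.mem_ofPred_eq, mulVec_add, mulVec_smul, Pi.add_apply,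
      Pi.smul_apply, hdx j' hj', smul_zero, add_zero] at hj' ⊢
    exact hj'
  · exact hjd.ne' (hdx j hjx)

theorem exists_forall_row_mem_span_tightRows [Fintype ι] {B : Matrix ι σ K} {c : ι → K}
    (h : ∃ x, B *ᵥ x ≤ c) : ∃ x, B *ᵥ x ≤ c ∧ ∀ i, B i ∈ span K (B '' tightRows B c x) := by
  obtain ⟨x, hx, hmax⟩ :=
    Set.Finite.exists_maximalFor' (tightRows B c) {x | B *ᵥ x ≤ c} (Set.toFinite _) h
  refine ⟨x, hx, fun i => by_contra fun hi => ?_⟩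
  obtain ⟨y, hy, hxy⟩ := exists_tightRows_ssuperset hx hi
  exact hxy.not_subset (hmax hy hxy.subset)

end Feasibility

theorem exists_isUnit_submatrix_of_linearIndependent_row [Field K] {k : ℕ}
    (R : Matrix (Fin k) σ K) (hR : LinearIndependent K R.row) :
    ∃ g : Fin k → σ, Injective g ∧ IsUnit (R.submatrix id g) := by
  have hcols : span K (Set.range R.col) = ⊤ := by
    apply Submodule.eq_top_of_finrank_eq
    rw [← rank_eq_finrank_span_cols, rank_eq_finrank_span_row, finrank_span_eq_card hR,
      Fintype.card_fin, Module.finrank_fin_fun]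
  obtain ⟨κ, a, ha, hspan, hli⟩ := exists_linearIndependent' K R.col
  have : Finite κ := Finite.of_injective a ha
  have : Fintype κ := Fintype.ofFinite κ
  have hcard : Fintype.card (Fin k) = Fintype.card κ := by
    rw [Fintype.card_fin, ← finrank_span_eq_card hli, hspan, hcols, finrank_top,
      Module.finrank_fin_fun]
  set e := Fintype.equivOfCardEq hcard
  exact ⟨a ∘ e, ha.comp e.injective,
    linearIndependent_cols_iff_isUnit.1 (hli.comp _ e.injective)⟩

theorem mulVec_eq_of_forall_row_mem_span [CommRing K] {B : Matrix ι σ K} {κ : Type*}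
    {f : κ → ι} (hB : ∀ i, B i ∈ span K (Set.range (B ∘ f))) {x y : σ → K}
    (hxy : ∀ q, (B *ᵥ x) (f q) = (B *ᵥ y) (f q)) : B *ᵥ x = B *ᵥ y := by
  have hspan : ∀ w ∈ span K (Set.range (B ∘ f)), w ⬝ᵥ x = w ⬝ᵥ y := fun w hw => by
    induction hw using Submodule.span_induction with
    | mem _ hw => obtain ⟨q, rfl⟩ := hw; exact hxy q
    | zero => simp
    | add u w _ _ hu hw => simp [add_dotProduct, hu, hw]
    | smul a w _ hw => simp [smul_dotProduct, hw]
  exact funext fun i => hspan _ (hB i)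

end Matrix

theorem SubdetBound.abs_adjugate_submatrix_apply_le {ℓ n : ℕ} {A : Matrix (Fin ℓ) (Fin n) ℤ}
    {Δ : ℤ} (hA : SubdetBound A Δ) {k : ℕ} {f : Fin k → Fin ℓ} {g : Fin k → Fin n}
    (hf : Injective f) (hg : Injective g) (p q : Fin k) :
    |(A.submatrix f g).adjugate p q| ≤ Δ := by
  cases k with
  | zero => exact p.elim0
  | succ m =>
    rw [adjugate_fin_succ_eq_det_submatrix, abs_mul, abs_pow, abs_neg, abs_one, one_pow, one_mul,
      submatrix_submatrix]
    exact hA m _ _ (hf.comp Fin.succAbove_right_injective) (hg.comp Fin.succAbove_right_injective)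

namespace Matrix

variable {ι σ κ R : Type*} [Fintype κ] [DecidableEq ι] [DecidableEq σ] [DecidableEq κ]

/-- The adjugate of `A.submatrix f g`, placed in the rows `g` and columns `f` of a zero matrix. -/
def paddedAdjugate [CommRing R] (A : Matrix ι σ R) (f : κ → ι) (g : κ → σ) : Matrix σ ι R :=
  (1 : Matrix σ σ R).submatrix id g * (A.submatrix f g).adjugate * (1 : Matrix ι ι R).submatrix f id

theorem mulVec_paddedAdjugate_mulVec_apply [CommRing R] [Fintype ι] [Fintype σ]
    (A : Matrix ι σ R) (f : κ → ι) (g : κ → σ) (v : ι → R) (q : κ) :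
    (A *ᵥ (paddedAdjugate A f g *ᵥ v)) (f q) = (A.submatrix f g).det * v (f q) := by
  have hQ : ∀ w : ι → R, ((1 : Matrix ι ι R).submatrix f id *ᵥ w) q = w (f q) := fun w =>
    congrFun (one_mulVec w) (f q)
  have hQA : (1 : Matrix ι ι R).submatrix f id * A = A.submatrix f id := by
    simpa using one_submatrix_mul f (Equiv.refl ι) A
  have hAP : A.submatrix f id * (1 : Matrix σ σ R).submatrix id g = A.submatrix f g := by
    simpa using mul_submatrix_one (Equiv.refl σ) g (A.submatrix f id)
  have h : (1 : Matrix ι ι R).submatrix f id * A * paddedAdjugate A f g =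
      (A.submatrix f g).det • (1 : Matrix ι ι R).submatrix f id := by
    rw [paddedAdjugate, ← Matrix.mul_assoc, ← Matrix.mul_assoc, hQA, hAP, mul_adjugate,
      smul_mul, Matrix.one_mul]
  have := congrFun (congrArg (· *ᵥ v) h) q
  rwa [← mulVec_mulVec, ← mulVec_mulVec, hQ, smul_mulVec, Pi.smul_apply, hQ,
    smul_eq_mul] at this

theorem abs_paddedAdjugate_apply_le [CommRing R] [LinearOrder R] [IsStrictOrderedRing R]
    [Fintype σ] [Fintype ι] (A : Matrix ι σ R) {f : κ → ι} {g : κ → σ} (hf : Injective f)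
    (hg : Injective g) {c : R} (hc : 0 ≤ c)
    (hA : ∀ p q, |(A.submatrix f g).adjugate p q| ≤ c) (i : σ) (j : ι) :
    |paddedAdjugate A f g i j| ≤ c := by
  by_cases hi : ∃ p, g p = i
  · by_cases hj : ∃ q, f q = j
    · obtain ⟨p, rfl⟩ := hi
      obtain ⟨q, rfl⟩ := hj
      simpa [paddedAdjugate, mul_apply, one_apply, hf.eq_iff, hg.eq_iff] using hA p q
    · push Not at hj
      simpa [paddedAdjugate, mul_apply, one_apply, hj] using hc
  · push Not at hi
    simpa [paddedAdjugate, mul_apply, one_apply, fun p => (hi p).symm] using hc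

end Matrix

theorem solution_rational_affine_transformation {ℓ n : ℕ}
    (A : Matrix (Fin ℓ) (Fin n) ℤ) (b : Fin ℓ → ℤ) (Δ : ℤ)
    (hΔ : 1 ≤ Δ) (hsub : SubdetBound A Δ)
    (hsol : ∃ x : Fin n → ℚ,
      (A.map (fun a => (a : ℚ))).mulVec x ≤ fun j => (b j : ℚ)) :
    ∃ (E : Matrix (Fin n) (Fin ℓ) ℤ) (a : ℤ),
      a ≠ 0 ∧ |a| ≤ Δ ∧ (∀ i j, |E i j| ≤ Δ) ∧
      (A.map (fun a => (a : ℚ))).mulVec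
        (fun i => (1 / (a : ℚ)) * ((E.mulVec b) i : ℚ)) ≤ fun j => (b j : ℚ) := by
  set B := A.map (fun a => (a : ℚ))
  obtain ⟨x, hx, hrows⟩ := exists_forall_row_mem_span_tightRows hsol
  obtain ⟨k, f, hf, hfx, hli, hfspan⟩ := exists_fin_linearIndependent_span_eq ℚ B (tightRows B _ x)
  obtain ⟨g, hg, hunit⟩ := exists_isUnit_submatrix_of_linearIndependent_row (B.submatrix f id) hli
  set a := (A.submatrix f g).det
  have ha : (a : ℚ) ≠ 0 := by
    rw [Int.cast_det]
    exact ((isUnit_iff_isUnit_det _).1 hunit).ne_zero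
  refine ⟨paddedAdjugate A f g, a, Int.cast_ne_zero.1 ha, hsub k f g hf hg,
    abs_paddedAdjugate_apply_le A hf hg (by linarith) (hsub.abs_adjugate_submatrix_apply_le hf hg),
    ?_⟩
  rwa [mulVec_eq_of_forall_row_mem_span (fun i => hfspan ▸ hrows i) fun q => ?_]
  have hcast : (B *ᵥ fun i => ((paddedAdjugate A f g *ᵥ b) i : ℚ)) (f q) = a * b (f q) := by
    rw [← Int.cast_mul, ← mulVec_paddedAdjugate_mulVec_apply]
    exact ((Int.castRingHom ℚ).map_mulVec A _ _).symm
  change (B *ᵥ (1 / (a : ℚ)) • fun i => ((paddedAdjugate A f g *ᵥ b) i : ℚ)) (f q) = (B *ᵥ x) (f q)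
  rw [show (B *ᵥ x) (f q) = b (f q) from hfx q, mulVec_smul, Pi.smul_apply, hcast, smul_eq_mul]
  field_simp
end

section
/- Let A be an ℓ×n integer matrix and let Δ ≥ 1 be an upper bound on the absolute values of all subdeterminants of A. Then there exist finitely many integer vectors y₁, …, y_s ∈ ℤ^n, each with every component of absolute value at most Δ, such that the cone {x ∈ ℝ^n : A x ≤ 0} equals the set of all nonnegative real linear combinations of y₁, …, y_s; that is, for every x ∈ ℝ^n, A x ≤ 0 holds if and only if there exist reals λ₁, …, λ_s ≥ 0 with x = λ₁ y₁ + ⋯ + λ_s y_s. -/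
open Matrix Filter Topology

theorem Matrix.abs_det_submatrix_fromRows_one_le {m n R : Type*} [CommRing R] [LinearOrder R]
    [IsStrictOrderedRing R] [DecidableEq n] {A : Matrix m n R} {Δ : R}
    (hA : ∀ (k : ℕ) (f : Fin k → m) (g : Fin k → n),
      Function.Injective f → Function.Injective g → |(A.submatrix f g).det| ≤ Δ)
    {k : ℕ} {f : Fin k → m ⊕ n} {g : Fin k → n} (hf : Function.Injective f)
    (hg : Function.Injective g) :
    |((fromRows A 1).submatrix f g).det| ≤ Δ := by
  induction k with
  | zero => exact hA 0 Fin.elim0 g (fun a => a.elim0) hg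
  | succ k ih =>
    obtain ⟨p, j, hp⟩ | ⟨f', rfl⟩ : (∃ p j, f p = .inr j) ∨ (∃ f', f = .inl ∘ f') := by
      simp_rw [← Sum.isRight_iff, or_iff_not_imp_left, not_exists, Bool.not_eq_true,
        Sum.isRight_eq_false, Sum.isLeft_iff]
      intro hfl
      choose f' hf' using hfl
      exact ⟨f', funext hf'⟩
    · have hexp := det_succ_row ((fromRows A 1).submatrix f g) p
      simp only [submatrix_apply, hp, fromRows_apply_inr, one_apply] at hexp
      by_cases hj : ∃ q, g q = j
      · obtain ⟨q, rfl⟩ := hj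
        rw [Fintype.sum_eq_single q fun q' hq' => by simp [hg.ne_iff.mpr hq'.symm]] at hexp
        rw [hexp, if_pos rfl, mul_one, abs_mul, abs_pow, abs_neg, abs_one, one_pow, one_mul]
        exact ih (hf.comp Fin.succAbove_right_injective) (hg.comp Fin.succAbove_right_injective)
      · push Not at hj
        rw [hexp, Finset.sum_eq_zero fun q _ => by simp [(hj q).symm], abs_zero]
        exact (abs_nonneg _).trans (hA 0 Fin.elim0 Fin.elim0 (fun a => a.elim0) (fun a => a.elim0))
    · exact hA _ f' g hf.of_comp hg

theorem Matrix.exists_injective_det_submatrix_ne_zero {m ι K : Type*} [Field K] [Finite m]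
    [Fintype ι] [DecidableEq ι] (M : Matrix m ι K) (hM : ∀ v, M *ᵥ v = 0 → v = 0) :
    ∃ σ : ι → m, Function.Injective σ ∧ (M.submatrix σ id).det ≠ 0 := by
  have hrank : M.rank = Fintype.card ι := by
    rw [rank, LinearMap.finrank_range_of_inj, Module.finrank_fintype_fun_eq_card]
    exact (injective_iff_map_eq_zero M.mulVecLin).2 hM
  obtain ⟨κ, a, ha, hspan, hli⟩ := exists_linearIndependent' K M.row
  have : Finite κ := Finite.of_injective a ha
  have := Fintype.ofFinite κ
  have hcard : Fintype.card ι = Fintype.card κ := by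
    rw [linearIndependent_iff_card_eq_finrank_span.1 hli, Set.finrank, hspan,
      ← rank_eq_finrank_span_row, hrank]
  let e : ι ≃ κ := Fintype.equivOfCardEq hcard
  refine ⟨a ∘ e, ha.comp e.injective, ?_⟩
  have hrows : LinearIndependent K (M.submatrix (a ∘ e) id).row := hli.comp e e.injective
  exact (isUnit_iff_isUnit_det _).1 (linearIndependent_rows_iff_isUnit.1 hrows) |>.ne_zero

theorem Matrix.map_det_smul_eq_of_map_mulVec_eq {ι R S : Type*} [Fintype ι] [DecidableEq ι]
    [CommRing R] [CommRing S] (f : R →+* S) (W : Matrix ι ι R) {u : ι → S} {c : ι → R}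
    (h : W.map f *ᵥ u = f ∘ c) : f W.det • u = f ∘ (W.adjugate *ᵥ c) := by
  have hadj : W.adjugate.map f = (W.map f).adjugate := f.map_adjugate W
  funext i
  rw [Function.comp_apply, RingHom.map_mulVec, ← h, hadj, mulVec_mulVec, adjugate_mul,
    smul_mulVec, one_mulVec, f.map_det]
  rfl

theorem eq_zero_of_mem_extremePoints {E : Type*} [AddCommGroup E] [Module ℝ E] {S : Set E}
    {u v : E} (hu : u ∈ S.extremePoints ℝ) (hv : ∀ᶠ t : ℝ in 𝓝 0, u + t • v ∈ S) : v = 0 := by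
  have hsymm : ∀ᶠ t : ℝ in 𝓝[>] 0, u + t • v ∈ S ∧ u + (-t) • v ∈ S :=
    (hv.and ((continuous_neg.tendsto' 0 0 neg_zero).eventually hv)).filter_mono
      nhdsWithin_le_nhds
  obtain ⟨t, ⟨hplus, hminus⟩, ht⟩ := (hsymm.and self_mem_nhdsWithin).exists
  have hseg : u ∈ openSegment ℝ (u + t • v) (u + (-t) • v) :=
    ⟨1 / 2, 1 / 2, by norm_num, by norm_num, by norm_num, by
      rw [smul_add, smul_add, add_add_add_comm, ← add_smul, smul_smul, smul_smul, ← add_smul]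
      norm_num⟩
  have := hu.2 hplus hminus hseg
  simpa [ne_of_gt ht] using this

section
variable {ℓ n : ℕ} (A : Matrix (Fin ℓ) (Fin n) ℤ)

def truncatedCone : Set (Fin n → ℝ) :=
  {x | A.map (↑) *ᵥ x ≤ 0} ∩ Metric.closedBall 0 1

noncomputable def boxGenerators (Δ : ℤ) : Finset (Fin n → ℤ) :=
  {z ∈ Fintype.piFinset fun _ => Finset.Icc (-Δ) Δ | ∀ i, (A *ᵥ z) i ≤ 0}

variable {A}

theorem mem_truncatedCone {u : Fin n → ℝ} :
    u ∈ truncatedCone A ↔ A.map (↑) *ᵥ u ≤ 0 ∧ ∀ j, |u j| ≤ 1 := by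
  simp [truncatedCone, pi_norm_le_iff_of_nonneg zero_le_one]

theorem mem_boxGenerators {Δ : ℤ} {z : Fin n → ℤ} :
    z ∈ boxGenerators A Δ ↔ (∀ j, |z j| ≤ Δ) ∧ A *ᵥ z ≤ 0 := by
  simp [boxGenerators, abs_le, Pi.le_def]

theorem isCompact_truncatedCone : IsCompact (truncatedCone A) :=
  (isCompact_closedBall 0 1).inter_left
    (isClosed_le (by fun_prop) continuous_const)

theorem convex_truncatedCone : Convex ℝ (truncatedCone A) :=
  (convex_halfSpace_le (A.map ((↑) : ℤ → ℝ)).mulVecLin.isLinear 0).inter (convex_closedBall 0 1)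

theorem eventually_add_smul_mem_truncatedCone {u v : Fin n → ℝ} (hu : u ∈ truncatedCone A)
    (hA : ∀ i, (A.map (↑) *ᵥ u) i = 0 → (A.map (↑) *ᵥ v) i = 0)
    (hbox : ∀ j, |u j| = 1 → v j = 0) :
    ∀ᶠ t : ℝ in 𝓝 0, u + t • v ∈ truncatedCone A := by
  rw [mem_truncatedCone] at hu
  simp only [mem_truncatedCone, Pi.le_def, eventually_and, eventually_all, mulVec_add,
    mulVec_smul, Pi.add_apply, Pi.smul_apply, smul_eq_mul, Pi.zero_apply]
  refine ⟨fun i => ?_, fun j => ?_⟩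
  · rcases (hu.1 i).lt_or_eq with hlt | heq
    · exact (ContinuousAt.eventually_lt (by fun_prop) (by fun_prop) (by simpa using hlt)).mono
        fun _ => le_of_lt
    · exact Eventually.of_forall fun t => by simp [heq, hA i heq]
  · rcases (hu.2 j).lt_or_eq with hlt | heq
    · exact (ContinuousAt.eventually_lt (by fun_prop) (by fun_prop) (by simpa using hlt)).mono
        fun _ => le_of_lt
    · exact Eventually.of_forall fun t => by simp [heq, hbox j heq]

/-- The rows of `[A; 1]` on which `u` is integral include all rows tight at `u`, which is what
the perturbation argument needs; integrality is what Cramer's rule needs later. -/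
theorem eq_zero_of_mem_extremePoints_truncatedCone {u v : Fin n → ℝ}
    (hu : u ∈ (truncatedCone A).extremePoints ℝ)
    (hv : ∀ r, ((fromRows A (1 : Matrix (Fin n) (Fin n) ℤ)).map (↑) *ᵥ u) r ∈
      Set.range (Int.cast : ℤ → ℝ) → ((fromRows A 1).map (↑) *ᵥ v) r = 0) : v = 0 := by
  have hmulVec (w : Fin n → ℝ) :
      (fromRows A (1 : Matrix (Fin n) (Fin n) ℤ)).map (↑) *ᵥ w = Sum.elim (A.map (↑) *ᵥ w) w := by
    simp [fromRows_map, fromRows_mulVec]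
  refine eq_zero_of_mem_extremePoints hu (eventually_add_smul_mem_truncatedCone hu.1
    (fun i hi => by simpa [hmulVec] using hv (.inl i) ⟨0, by simp [hmulVec, hi]⟩) (fun j hj => ?_))
  have hint : u j ∈ Set.range (Int.cast : ℤ → ℝ) := by
    rcases (abs_eq zero_le_one).1 hj with h | h
    · exact ⟨1, by simp [h]⟩
    · exact ⟨-1, by simp [h]⟩
  simpa [hmulVec] using hv (.inr j) (by simpa [hmulVec] using hint)

theorem exists_pos_smul_eq_intCast_of_mem_extremePoints {Δ : ℤ} (hsub : SubdetBound A Δ)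
    {u : Fin n → ℝ} (hu : u ∈ (truncatedCone A).extremePoints ℝ) :
    ∃ d : ℤ, 0 < d ∧ d ≤ Δ ∧ ∃ z : Fin n → ℤ, (d : ℝ) • u = Int.cast ∘ z := by
  set M := fromRows A (1 : Matrix (Fin n) (Fin n) ℤ)
  let T := {r // (M.map (Int.castRingHom ℝ) *ᵥ u) r ∈ Set.range (Int.cast : ℤ → ℝ)}
  obtain ⟨σ, hσ, hdet⟩ := exists_injective_det_submatrix_ne_zero
    ((M.map (Int.castRingHom ℝ)).submatrix (Subtype.val : T → _) id) fun v hv =>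
      eq_zero_of_mem_extremePoints_truncatedCone hu fun r hr => congrFun hv ⟨r, hr⟩
  choose c hc using fun p => (σ p).2
  set W := M.submatrix (Subtype.val ∘ σ) id
  have hWu : W.map (Int.castRingHom ℝ) *ᵥ u = Int.castRingHom ℝ ∘ c :=
    funext fun p => (hc p).symm
  have hW := map_det_smul_eq_of_map_mulVec_eq (Int.castRingHom ℝ) W hWu
  have hdet0 : W.det ≠ 0 := by
    have hWR : ((M.map (Int.castRingHom ℝ)).submatrix Subtype.val id).submatrix σ id =
        (Int.castRingHom ℝ).mapMatrix W := rfl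
    rw [hWR, ← RingHom.map_det] at hdet
    exact fun h => hdet (by simp [h])
  have hWΔ : |W.det| ≤ Δ :=
    abs_det_submatrix_fromRows_one_le hsub (Subtype.val_injective.comp hσ) Function.injective_id
  rcases hdet0.lt_or_gt with hneg | hpos
  · refine ⟨-W.det, by omega, by rw [abs_of_neg hneg] at hWΔ; exact hWΔ, -(W.adjugate *ᵥ c), ?_⟩
    ext j
    have := congrFun hW j
    simp only [Int.coe_castRingHom, Pi.smul_apply, Function.comp_apply, smul_eq_mul] at this
    simp [this]
  · exact ⟨W.det, hpos, (le_abs_self _).trans hWΔ, _, hW⟩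

theorem mem_boxGenerators_of_smul_eq {Δ : ℤ} {u : Fin n → ℝ} (hu : u ∈ truncatedCone A)
    {d : ℤ} (hd : 0 < d) (hdΔ : d ≤ Δ) {z : Fin n → ℤ} (hz : (d : ℝ) • u = Int.cast ∘ z) :
    z ∈ boxGenerators A Δ := by
  rw [mem_truncatedCone] at hu
  have hdR : (0 : ℝ) ≤ d := by exact_mod_cast hd.le
  refine mem_boxGenerators.2 ⟨fun j => ?_, fun i => ?_⟩
  · have hzj : (z j : ℝ) = d * u j := by simpa using (congrFun hz j).symm
    suffices |(z j : ℝ)| ≤ Δ by exact_mod_cast this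
    calc |(z j : ℝ)| = d * |u j| := by rw [hzj, abs_mul, abs_of_nonneg hdR]
      _ ≤ d * 1 := by gcongr; exact hu.2 j
      _ ≤ Δ := by rw [mul_one]; exact_mod_cast hdΔ
  · suffices ((A *ᵥ z) i : ℝ) ≤ 0 by exact_mod_cast this
    have hcast := (Int.castRingHom ℝ).map_mulVec A z i
    simp only [Int.coe_castRingHom] at hcast
    rw [hcast, ← hz, mulVec_smul]
    exact mul_nonpos_of_nonneg_of_nonpos hdR (hu.1 i)

theorem extremePoints_truncatedCone_subset {Δ : ℤ} (hsub : SubdetBound A Δ) :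
    (truncatedCone A).extremePoints ℝ ⊆ Set.image2 (fun (d : ℤ) (z : Fin n → ℤ) =>
      (d : ℝ)⁻¹ • (Int.cast ∘ z : Fin n → ℝ)) (Set.Icc 1 Δ) (boxGenerators A Δ) := by
  intro u hu
  obtain ⟨d, hd, hdΔ, z, hz⟩ := exists_pos_smul_eq_intCast_of_mem_extremePoints hsub hu
  refine ⟨d, ⟨hd, hdΔ⟩, z, mem_boxGenerators_of_smul_eq hu.1 hd hdΔ hz, ?_⟩
  simp only [← hz, inv_smul_smul₀ (show (d : ℝ) ≠ 0 by exact_mod_cast hd.ne')]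

theorem truncatedCone_subset_hull {Δ : ℤ} (hsub : SubdetBound A Δ) :
    truncatedCone A ⊆
      PointedCone.hull ℝ ((fun z => (Int.cast ∘ z : Fin n → ℝ)) '' boxGenerators A Δ) := by
  set K := PointedCone.hull ℝ ((fun z => (Int.cast ∘ z : Fin n → ℝ)) '' boxGenerators A Δ)
  set F := Set.image2 (fun (d : ℤ) (z : Fin n → ℤ) => (d : ℝ)⁻¹ • (Int.cast ∘ z : Fin n → ℝ))
    (Set.Icc 1 Δ) (boxGenerators A Δ)
  have hFK : F ⊆ K := by
    rintro _ ⟨d, hd, z, hz, rfl⟩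
    exact K.smul_mem (inv_nonneg.2 (by exact_mod_cast (zero_le_one.trans hd.1)))
      (PointedCone.subset_hull ⟨z, hz, rfl⟩)
  calc truncatedCone A
      = closure (convexHull ℝ ((truncatedCone A).extremePoints ℝ)) :=
        (closure_convexHull_extremePoints isCompact_truncatedCone convex_truncatedCone).symm
    _ ⊆ closure (convexHull ℝ F) := closure_mono (convexHull_mono
        (extremePoints_truncatedCone_subset hsub))
    _ = convexHull ℝ F :=
        ((Set.finite_Icc 1 Δ).image2 _ (boxGenerators A Δ).finite_toSet).isClosed_convexHull ℝ
          |>.closure_eq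
    _ ⊆ K := convexHull_min hFK K.convex

theorem mulVec_nonpos_iff_mem_hull {Δ : ℤ} (hsub : SubdetBound A Δ) {x : Fin n → ℝ} :
    A.map (↑) *ᵥ x ≤ 0 ↔
      x ∈ PointedCone.hull ℝ ((fun z => (Int.cast ∘ z : Fin n → ℝ)) '' boxGenerators A Δ) := by
  constructor
  · intro hx
    rcases eq_or_ne x 0 with rfl | hx0
    · exact zero_mem _
    have hpos : 0 < ‖x‖ := norm_pos_iff.2 hx0
    have hu : ‖x‖⁻¹ • x ∈ truncatedCone A := by
      refine ⟨?_, ?_⟩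
      · rw [Set.mem_ofPred_eq, mulVec_smul]
        exact smul_nonpos_of_nonneg_of_nonpos (inv_nonneg.2 hpos.le) hx
      · rw [mem_closedBall_zero_iff, norm_smul, norm_inv, norm_norm, inv_mul_cancel₀ hpos.ne']
    simpa [smul_smul, hpos.ne'] using
      PointedCone.smul_mem _ hpos.le (truncatedCone_subset_hull hsub hu)
  · intro hx
    induction hx using Submodule.span_induction with
    | mem y hy =>
      obtain ⟨z, hz, rfl⟩ := hy
      intro i
      have hcast := (Int.castRingHom ℝ).map_mulVec A z i
      simp only [Int.coe_castRingHom] at hcast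
      rw [Pi.zero_apply, ← hcast]
      exact Int.cast_nonpos.2 ((mem_boxGenerators.1 hz).2 i)
    | zero => simp
    | add y w _ _ hy hw => rw [mulVec_add]; exact add_nonpos hy hw
    | smul c y _ hy =>
      rw [← Nonneg.coe_smul, mulVec_smul]
      exact smul_nonpos_of_nonneg_of_nonpos c.2 hy

end

theorem cone_generators_general {ℓ n : ℕ}
    (A : Matrix (Fin ℓ) (Fin n) ℤ) (Δ : ℤ)
    (hsub : SubdetBound A Δ) :
    ∃ (s : ℕ) (y : Fin s → Fin n → ℤ),
      (∀ i j, |y i j| ≤ Δ) ∧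
      ∀ x : Fin n → ℝ,
        (A.map (fun a => (a : ℝ))).mulVec x ≤ 0 ↔
          ∃ lam : Fin s → ℝ, (∀ i, 0 ≤ lam i) ∧
            ∀ j, x j = ∑ i, lam i * (y i j : ℝ) := by
  set G := boxGenerators A Δ
  let y : Fin G.card → Fin n → ℤ := fun i => G.equivFin.symm i
  have hrange : Set.range (fun i => (Int.cast ∘ y i : Fin n → ℝ)) =
      (fun z => (Int.cast ∘ z : Fin n → ℝ)) '' G := by
    rw [Set.image_eq_range]
    exact G.equivFin.symm.surjective.range_comp fun z : G => (Int.cast ∘ (z : Fin n → ℤ))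
  refine ⟨G.card, y, fun i => (mem_boxGenerators.1 (G.equivFin.symm i).2).1, fun x => ?_⟩
  rw [mulVec_nonpos_iff_mem_hull hsub, ← hrange, Submodule.mem_span_range_iff_exists_fun]
  constructor
  · rintro ⟨c, rfl⟩
    exact ⟨fun i => c i, fun i => (c i).2, fun j => by simp [← Nonneg.coe_smul]⟩
  · rintro ⟨lam, hlam, hx⟩
    exact ⟨fun i => ⟨lam i, hlam i⟩, funext fun j => by simp [hx j]⟩

theorem cone_generators {ℓ n : ℕ}
    (A : Matrix (Fin ℓ) (Fin n) ℤ) (Δ : ℤ)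
    (hΔ : 1 ≤ Δ) (hsub : SubdetBound A Δ) :
    ∃ (s : ℕ) (y : Fin s → Fin n → ℤ),
      (∀ i j, |y i j| ≤ Δ) ∧
      ∀ x : Fin n → ℝ,
        (A.map (fun a => (a : ℝ))).mulVec x ≤ 0 ↔
          ∃ lam : Fin s → ℝ, (∀ i, 0 ≤ lam i) ∧
            ∀ j, x j = ∑ i, lam i * (y i j : ℝ) :=
  cone_generators_general A Δ hsub
end

section
/- Let A be an ℓ×n integer matrix, b an integer vector of dimension ℓ, and let Δ ≥ 1 be an upper bound on the absolute values of all subdeterminants of A. Suppose the system A x ≤ b has an integral solution z ∈ ℤ^n, and let r ∈ ℚ^n be any rational solution of A x ≤ b. Then there exists an integral solution z* ∈ ℤ^n of A x ≤ b such that every component of z* − r has absolute value at most nΔ. -/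
open Matrix

section OrderedField

variable {K : Type*} [Field K] [LinearOrder K] [IsStrictOrderedRing K]

/-- The ratio test of the simplex method. -/
lemma exists_nonneg_sub_smul_eq_zero {ι : Type*} [Fintype ι] {a w : ι → K} (ha : 0 ≤ a)
    (hw : ∃ i, 0 < w i) :
    ∃ τ : K, 0 ≤ τ ∧ 0 ≤ a - τ • w ∧ ∃ i, 0 < w i ∧ a i = τ * w i := by
  classical
  obtain ⟨i, hi, hmin⟩ := Finset.exists_min_image {i | 0 < w i} (fun i => a i / w i)
    (by simpa [Finset.Nonempty] using hw)
  rw [Finset.mem_filter_univ] at hi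
  refine ⟨a i / w i, div_nonneg (ha i) hi.le, fun j => ?_, i, hi, by field_simp⟩
  rcases lt_or_ge 0 (w j) with hj | hj
  · have := hmin j (by simpa using hj)
    rw [le_div_iff₀ hj] at this
    simpa using this
  · simpa using (mul_nonpos_of_nonneg_of_nonpos (div_nonneg (ha i) hi.le) hj).trans (ha j)

lemma exists_pos_sub_smul_support_ssubset {ι : Type*} [Fintype ι] {a w : ι → K} (ha : 0 ≤ a)
    (hw : ∀ i, a i = 0 → w i = 0) (hpos : ∃ i, 0 < w i) :
    ∃ τ : K, 0 < τ ∧ 0 ≤ a - τ • w ∧ Function.support (a - τ • w) ⊂ Function.support a := by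
  obtain ⟨τ, hτ, hnonneg, i, hi, hai⟩ := exists_nonneg_sub_smul_eq_zero ha hpos
  have hai' : a i ≠ 0 := fun h => hi.ne' (hw i h)
  refine ⟨τ, lt_of_le_of_ne hτ ?_, hnonneg, ?_⟩
  · rintro rfl
    simp [hai] at hai'
  refine Set.ssubset_iff_exists.mpr ⟨fun j hj ha => hj ?_, i, hai', by simp [hai]⟩
  simp [ha, hw j ha]

/-- Move from `y` along `-u`, and along `u` unless `u ∈ C`, until one more constraint becomes
tight: `y` is a conic combination of the endpoints (and of `u`). -/
lemma PointedCone.mem_of_support_descent {V ι : Type*} [AddCommGroup V] [Module K V] [Fintype ι]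
    {C : PointedCone K V} (L : V →ₗ[K] ι → K) {y u : V} (hy : 0 ≤ L y)
    (hC : ∀ x, 0 ≤ L x → Function.support (L x) ⊂ Function.support (L y) → x ∈ C)
    (hu : ∀ i, L y i = 0 → L u i = 0) (hpos : ∃ i, 0 < L u i) (hneg : u ∈ C ∨ ∃ i, L u i < 0) :
    y ∈ C := by
  obtain ⟨τ₁, hτ₁, h₁, hs₁⟩ := exists_pos_sub_smul_support_ssubset hy hu hpos
  have hy₁ : y - τ₁ • u ∈ C := hC _ (by simpa using h₁) (by simpa using hs₁)
  rcases hneg with hu' | ⟨i, hi⟩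
  · simpa using C.add_mem hy₁ (C.smul_mem hτ₁.le hu')
  obtain ⟨τ₂, hτ₂, h₂, hs₂⟩ := exists_pos_sub_smul_support_ssubset (w := -L u) hy
    (fun i hi => by simp [hu i hi]) ⟨i, by simpa using hi⟩
  have hy₂ : y + τ₂ • u ∈ C := hC _ (by simpa using h₂) (by simpa using hs₂)
  have hsum : 0 < τ₁ + τ₂ := add_pos hτ₁ hτ₂
  convert C.add_mem (C.smul_mem (div_nonneg hτ₂.le hsum.le) hy₁)
    (C.smul_mem (div_nonneg hτ₁.le hsum.le) hy₂) using 1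
  simp only [smul_sub, smul_add, smul_smul]
  match_scalars <;> field_simp <;> ring

lemma exists_sum_succAbove_eq_of_not_linearIndependent {V : Type*} [AddCommGroup V] [Module K V]
    {m : ℕ} {c : Fin (m + 1) → K} (hc : 0 ≤ c) {g : Fin (m + 1) → V}
    (hg : ¬ LinearIndependent K g) :
    ∃ (i : Fin (m + 1)) (c' : Fin m → K), 0 ≤ c' ∧
      ∑ t, c' t • g (i.succAbove t) = ∑ t, c t • g t := by
  obtain ⟨d, hd, hpos⟩ : ∃ d : Fin (m + 1) → K, ∑ t, d t • g t = 0 ∧ ∃ i, 0 < d i := by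
    obtain ⟨d, hd, i, hi⟩ := Fintype.not_linearIndependent_iff.mp hg
    rcases hi.lt_or_gt with hi | hi
    · exact ⟨-d, by simp [hd], i, by simpa using hi⟩
    · exact ⟨d, hd, i, hi⟩
  obtain ⟨τ, -, hnonneg, i, -, hi⟩ := exists_nonneg_sub_smul_eq_zero hc hpos
  refine ⟨i, fun t => (c - τ • d) (i.succAbove t), fun t => hnonneg _, ?_⟩
  have hsum := Fin.sum_univ_succAbove (fun t => (c - τ • d) t • g t) i
  simp only [Pi.sub_apply, Pi.smul_apply, smul_eq_mul, hi, sub_self, zero_smul, zero_add] at hsum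
  simp only [Pi.sub_apply, Pi.smul_apply, smul_eq_mul]
  rw [← hsum]
  simp [sub_smul, Finset.sum_sub_distrib, mul_smul, ← Finset.smul_sum, hd]

/-- Carathéodory's theorem for cones. -/
theorem PointedCone.exists_fin_sum_of_mem_hull {V : Type*} [AddCommGroup V] [Module K V]
    [FiniteDimensional K V] {s : Set V} {x : V} (hx : x ∈ PointedCone.hull K s) :
    ∃ (m : ℕ) (c : Fin m → K) (g : Fin m → V), m ≤ Module.finrank K V ∧ 0 ≤ c ∧
      (∀ t, g t ∈ s) ∧ ∑ t, c t • g t = x := by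
  suffices h : ∀ (m : ℕ) (c : Fin m → K) (g : Fin m → V), 0 ≤ c → (∀ t, g t ∈ s) →
      ∃ (m' : ℕ) (c' : Fin m' → K) (g' : Fin m' → V), m' ≤ Module.finrank K V ∧ 0 ≤ c' ∧
        (∀ t, g' t ∈ s) ∧ ∑ t, c' t • g' t = ∑ t, c t • g t by
    obtain ⟨m, c, g, rfl⟩ := Submodule.mem_span_set'.mp hx
    simpa using h m (fun t => c t) (fun t => g t) (fun t => (c t).2) (fun t => (g t).2)
  intro m
  induction m with
  | zero => exact fun c g hc hg => ⟨0, c, g, Nat.zero_le _, hc, hg, rfl⟩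
  | succ m ih =>
    intro c g hc hg
    by_cases hli : LinearIndependent K g
    · exact ⟨m + 1, c, g, by simpa using hli.fintype_card_le_finrank, hc, hg, rfl⟩
    obtain ⟨i, c', hc', hsum⟩ := exists_sum_succAbove_eq_of_not_linearIndependent hc hli
    obtain ⟨m', c'', g', hm', hc'', hg', hsum'⟩ := ih c' _ hc' fun t => hg _
    exact ⟨m', c'', g', hm', hc'', hg', hsum'.trans hsum⟩

end OrderedField

namespace Matrix

lemma exists_submatrix_det_ne_zero {K κ n : Type*} [Field K] [Fintype κ] [DecidableEq κ]
    [Fintype n] (M : Matrix κ n K) (hM : LinearIndependent K M.row) :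
    ∃ c : κ → n, Function.Injective c ∧ (M.submatrix id c).det ≠ 0 := by
  have hspan : Submodule.span K (Set.range M.col) = ⊤ := by
    apply Submodule.eq_top_of_finrank_eq
    rw [← rank_eq_finrank_span_cols, hM.rank_matrix, Module.finrank_fintype_fun_eq_card]
  obtain ⟨κ', a, ha, hspan', hli⟩ := exists_linearIndependent' K M.col
  have : Fintype κ' := @Fintype.ofFinite κ' (Finite.of_injective a ha)
  have hcard : Fintype.card κ = Fintype.card κ' := by
    rw [← Module.finrank_fintype_fun_eq_card (R := K),
      Module.finrank_eq_card_basis (Module.Basis.mk hli (by rw [hspan', hspan]))]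
  let e := Fintype.equivOfCardEq hcard
  refine ⟨a ∘ e, ha.comp e.injective, ?_⟩
  rw [← isUnit_iff_ne_zero, ← isUnit_iff_isUnit_det, ← linearIndependent_cols_iff_isUnit]
  exact hli.comp e e.injective

lemma exists_linearIndependent_rows_ker {K m n : Type*} [Field K] [Finite m] [Fintype n]
    (M : Matrix m n K) (T : Set m) :
    ∃ (k : ℕ) (f : Fin k → m), Function.Injective f ∧ (∀ t, f t ∈ T) ∧
      LinearIndependent K (M.submatrix f id).row ∧
      ∀ x, M.submatrix f id *ᵥ x = 0 → ∀ i ∈ T, (M *ᵥ x) i = 0 := by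
  obtain ⟨κ, a, ha, hspan, hli⟩ := exists_linearIndependent' K (fun i : T => M i)
  have : Finite κ := Finite.of_injective a ha
  let e := Finite.equivFin κ
  refine ⟨Nat.card κ, Subtype.val ∘ a ∘ e.symm,
    Subtype.val_injective.comp (ha.comp e.symm.injective), fun t => (a (e.symm t)).2,
    hli.comp e.symm e.symm.injective, fun x hx i hi => ?_⟩
  have hrow : M i ∈ LinearMap.range (M.submatrix (Subtype.val ∘ a ∘ e.symm) id).vecMulLinear := by
    rw [range_vecMulLinear]
    have : Set.range (M.submatrix (Subtype.val ∘ a ∘ e.symm) id).row =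
        Set.range ((fun i : T => M i) ∘ a) :=
      e.symm.surjective.range_comp ((fun i : T => M i) ∘ a)
    rw [this, hspan]
    exact Submodule.subset_span ⟨⟨i, hi⟩, rfl⟩
  obtain ⟨w, hw⟩ := hrow
  rw [mulVec, ← hw, vecMulLinear_apply, ← dotProduct_mulVec, hx, dotProduct_zero]

lemma intCast_mulVec_apply {m n R : Type*} [Fintype n] [Ring R] (A : Matrix m n ℤ) (v : n → ℤ)
    (i : m) : (((A *ᵥ v) i : ℤ) : R) = (A.map (Int.cast : ℤ → R) *ᵥ (Int.cast ∘ v)) i :=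
  RingHom.map_mulVec (Int.castRingHom R) A v i

section KernelProjector

variable {κ ι R : Type*} [Fintype κ] [DecidableEq κ] [DecidableEq ι] [CommRing R]

/-- With `N = M.submatrix id c`, this sends `y` to `det N • y` minus the solution `x` of
`N x = M y` given by Cramer's rule, placed on the coordinates `c`. So it maps into `ker M`, acts
on `ker M` as `det N`, and its entries are `det N`, `0` and maximal minors of `M`. -/
def kernelProjector (M : Matrix κ ι R) (c : κ → ι) : Matrix ι ι R :=
  (M.submatrix id c).det • 1 - (1 : Matrix ι ι R).submatrix id c * (M.submatrix id c).adjugate * M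

variable (M : Matrix κ ι R) (c : κ → ι)

lemma mul_kernelProjector [Fintype ι] : M * kernelProjector M c = 0 := by
  have hS : M * (1 : Matrix ι ι R).submatrix id c = M.submatrix id c := by
    simpa using mul_submatrix_one (Equiv.refl ι) c M
  rw [kernelProjector, Matrix.mul_sub, ← Matrix.mul_assoc, ← Matrix.mul_assoc, hS, mul_adjugate]
  simp

lemma kernelProjector_mulVec_of_mulVec_eq_zero [Fintype ι] {y : ι → R} (hy : M *ᵥ y = 0) :
    kernelProjector M c *ᵥ y = (M.submatrix id c).det • y := by
  simp [kernelProjector, sub_mulVec, ← mulVec_mulVec, hy, smul_mulVec]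

lemma kernelProjector_apply (i j : ι) : kernelProjector M c i j =
    (M.submatrix id c).det * (1 : Matrix ι ι R) i j -
      ∑ t, (1 : Matrix ι ι R) i (c t) * (M.submatrix id (Function.update c t j)).det := by
  have h : ∀ t, ((M.submatrix id c).adjugate * M) t j =
      (M.submatrix id (Function.update c t j)).det := by
    intro t
    change ((M.submatrix id c).adjugate *ᵥ fun s => M s j) t = _
    rw [← cramer_eq_adjugate_mulVec, cramer_apply]
    congr 1
    ext s s'
    by_cases h : s' = t <;> simp [h]
  simp [kernelProjector, Matrix.mul_assoc, mul_apply, h]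
  rfl

lemma kernelProjector_map {S : Type*} [CommRing S] (f : R →+* S) :
    (kernelProjector M c).map f = kernelProjector (M.map f) c := by
  ext i j
  simp [kernelProjector_apply, RingHom.map_det, one_apply, apply_ite f, submatrix_map]

lemma abs_kernelProjector_apply_le [LinearOrder R] [IsStrictOrderedRing R] {Δ : R}
    (hc : Function.Injective c) (hM : ∀ c' : κ → ι, |(M.submatrix id c').det| ≤ Δ)
    (i j : ι) : |kernelProjector M c i j| ≤ Δ := by
  have hΔ : 0 ≤ Δ := (abs_nonneg _).trans (hM c)
  rw [kernelProjector_apply]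
  by_cases hi : ∃ s, c s = i
  · obtain ⟨s, rfl⟩ := hi
    rw [Finset.sum_eq_single s (fun t _ hts => by simp [hc.ne hts.symm]) (by simp)]
    by_cases hj : c s = j
    · subst hj
      simpa using hΔ
    · simpa [hj] using hM (Function.update c s j)
  · push Not at hi
    rw [Finset.sum_eq_zero (fun t _ => by simp [(hi t).symm])]
    by_cases hj : i = j
    · subst hj
      simpa using hM c
    · simpa [hj] using hΔ

end KernelProjector

end Matrix

namespace SubdetBound

variable {ℓ n : ℕ} {A : Matrix (Fin ℓ) (Fin n) ℤ} {Δ : ℤ}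

lemma one_le (hA : SubdetBound A Δ) : 1 ≤ Δ := by
  simpa using hA 0 Fin.elim0 Fin.elim0 (fun a => a.elim0) (fun a => a.elim0)

lemma abs_det_submatrix_le (hA : SubdetBound A Δ) {k : ℕ} {f : Fin k → Fin ℓ}
    (hf : Function.Injective f) (c : Fin k → Fin n) : |(A.submatrix f c).det| ≤ Δ := by
  by_cases hc : Function.Injective c
  · exact hA k f c hf hc
  obtain ⟨s, t, hst, hne⟩ : ∃ s t, c s = c t ∧ s ≠ t := by
    simpa [Function.Injective] using hc
  rw [det_zero_of_column_eq hne (fun i => by simp [hst]), abs_zero]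
  exact zero_le_one.trans hA.one_le

lemma diagonal_mul (hA : SubdetBound A Δ) {ε : Fin ℓ → ℤ} (hε : ∀ i, |ε i| = 1) :
    SubdetBound (diagonal ε * A) Δ := by
  intro k f c hf hc
  have h : (diagonal ε * A).submatrix f c = of fun a b => ε (f a) * A.submatrix f c a b := by
    ext
    simp
  rw [h, det_mul_column, abs_mul, Finset.abs_prod]
  simpa [hε] using hA k f c hf hc

theorem mem_span_integral_ker (hA : SubdetBound A Δ) (T : Set (Fin ℓ)) {y : Fin n → ℚ}
    (hy : ∀ i ∈ T, (A.map (Int.cast : ℤ → ℚ) *ᵥ y) i = 0) :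
    y ∈ Submodule.span ℚ ((Int.cast ∘ ·) ''
      {v : Fin n → ℤ | (∀ i ∈ T, (A *ᵥ v) i = 0) ∧ ∀ j, |v j| ≤ Δ}) := by
  set Aq := A.map (Int.cast : ℤ → ℚ)
  obtain ⟨k, f, hf, hfT, hli, hker⟩ := Aq.exists_linearIndependent_rows_ker T
  obtain ⟨c, hc, hdet⟩ := (Aq.submatrix f id).exists_submatrix_det_ne_zero hli
  set P := kernelProjector (A.submatrix f id) c
  have hPq : P.map Int.cast = kernelProjector (Aq.submatrix f id) c :=
    kernelProjector_map _ c (Int.castRingHom ℚ)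
  have hPy : P.map Int.cast *ᵥ y = ((Aq.submatrix f id).submatrix id c).det • y := by
    rw [hPq]
    exact kernelProjector_mulVec_of_mulVec_eq_zero _ _ (funext fun t => hy (f t) (hfT t))
  have hmem : y ∈ Submodule.span ℚ (Set.range (P.map (Int.cast : ℤ → ℚ)).col) := by
    rw [← inv_smul_smul₀ hdet y, ← hPy, ← range_mulVecLin]
    exact Submodule.smul_mem _ _ ⟨y, rfl⟩
  refine Submodule.span_mono ?_ hmem
  rintro _ ⟨j, rfl⟩
  refine ⟨P.col j, ⟨fun i hi => ?_, fun i => ?_⟩, rfl⟩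
  · have hcol : Aq.submatrix f id *ᵥ (Int.cast ∘ P.col j) = 0 := by
      ext t
      simpa [mul_apply, mulVec, dotProduct, ← hPq] using
        congrFun (congrFun (mul_kernelProjector (Aq.submatrix f id) c) t) j
    exact_mod_cast (intCast_mulVec_apply A _ i).trans (hker _ hcol i hi)
  · exact abs_kernelProjector_apply_le _ _ hc (fun c' => by
      simpa using hA.abs_det_submatrix_le hf c') i j

lemma mem_hull_integral_of_mulVec_eq_zero (hA : SubdetBound A Δ) {y : Fin n → ℚ}
    (hy : A.map (Int.cast : ℤ → ℚ) *ᵥ y = 0) :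
    y ∈ PointedCone.hull ℚ ((Int.cast ∘ ·) '' {v : Fin n → ℤ | 0 ≤ A *ᵥ v ∧ ∀ j, |v j| ≤ Δ}) := by
  set C : PointedCone ℚ (Fin n → ℚ) :=
    PointedCone.hull ℚ ((Int.cast ∘ ·) '' {v : Fin n → ℤ | 0 ≤ A *ᵥ v ∧ ∀ j, |v j| ≤ Δ})
  have hgen : ∀ v : Fin n → ℤ, 0 ≤ A *ᵥ v → (∀ j, |v j| ≤ Δ) → (Int.cast ∘ v : Fin n → ℚ) ∈ C :=
    fun v hv hvΔ => PointedCone.subset_hull ⟨v, ⟨hv, hvΔ⟩, rfl⟩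
  have hker := hA.mem_span_integral_ker Set.univ (fun i _ => congrFun hy i)
  refine (PointedCone.mem_lineal.mp ((Submodule.span_le (p := C.lineal)).mpr ?_ hker)).1
  rintro _ ⟨v, ⟨hv, hvΔ⟩, rfl⟩
  have hAv : A *ᵥ v = 0 := funext fun i => hv i (Set.mem_univ i)
  refine PointedCone.mem_lineal.mpr ⟨hgen v (by simp [hAv]) hvΔ, ?_⟩
  convert hgen (-v) (by simp [mulVec_neg, hAv]) (by simpa using hvΔ) using 1
  ext j
  simp

theorem mem_hull_integral (hA : SubdetBound A Δ) {y : Fin n → ℚ}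
    (hy : 0 ≤ A.map (Int.cast : ℤ → ℚ) *ᵥ y) :
    y ∈ PointedCone.hull ℚ ((Int.cast ∘ ·) '' {v : Fin n → ℤ | 0 ≤ A *ᵥ v ∧ ∀ j, |v j| ≤ Δ}) := by
  set Aq := A.map (Int.cast : ℤ → ℚ)
  induction hN : (Function.support (Aq *ᵥ y)).ncard using Nat.strong_induction_on
    generalizing y with
  | _ N ih =>
  by_cases hzero : Aq *ᵥ y = 0
  · exact hA.mem_hull_integral_of_mulVec_eq_zero hzero
  have hker := hA.mem_span_integral_ker {i | (Aq *ᵥ y) i = 0} (fun i hi => hi)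
  obtain ⟨i₀, hi₀⟩ : ∃ i, (Aq *ᵥ y) i ≠ 0 := by
    by_contra! h
    exact hzero (funext h)
  obtain ⟨v, hvT, hvΔ, hv⟩ : ∃ v : Fin n → ℤ, (∀ i, (Aq *ᵥ y) i = 0 → (A *ᵥ v) i = 0) ∧
      (∀ j, |v j| ≤ Δ) ∧ (A *ᵥ v) i₀ ≠ 0 := by
    by_contra! h
    refine hi₀ (Submodule.span_le.mpr ?_ hker :
      y ∈ LinearMap.ker ((LinearMap.proj i₀).comp Aq.mulVecLin))
    rintro _ ⟨v, ⟨hvT, hvΔ⟩, rfl⟩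
    simp [Aq, ← intCast_mulVec_apply, h v hvT hvΔ]
  obtain ⟨v, hvT, hvΔ, hpos⟩ : ∃ v : Fin n → ℤ, (∀ i, (Aq *ᵥ y) i = 0 → (A *ᵥ v) i = 0) ∧
      (∀ j, |v j| ≤ Δ) ∧ 0 < (A *ᵥ v) i₀ := by
    rcases hv.lt_or_gt with h | h
    · exact ⟨-v, fun i hi => by simp [mulVec_neg, hvT i hi], by simpa using hvΔ,
        by simpa [mulVec_neg] using h⟩
    · exact ⟨v, hvT, hvΔ, h⟩
  refine PointedCone.mem_of_support_descent Aq.mulVecLin (u := Int.cast ∘ v) hy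
    (fun x hx hsupp => ih _ ?_ (by simpa using hx) rfl) ?_ ?_ ?_
  · rw [← hN]
    simpa using Set.ncard_lt_ncard hsupp (Set.toFinite _)
  · intro i hi
    simp [Aq, ← intCast_mulVec_apply, hvT i hi]
  · exact ⟨i₀, by simpa [Aq, ← intCast_mulVec_apply] using hpos⟩
  · by_cases hneg : ∃ i, (A *ᵥ v) i < 0
    · obtain ⟨i, hi⟩ := hneg
      exact Or.inr ⟨i, by simpa [Aq, ← intCast_mulVec_apply] using hi⟩
    · push Not at hneg
      exact Or.inl (PointedCone.subset_hull ⟨v, ⟨hneg, hvΔ⟩, rfl⟩)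

theorem exists_conic_decomposition (hA : SubdetBound A Δ) (y : Fin n → ℚ) :
    ∃ (m : ℕ) (c : Fin m → ℚ) (g : Fin m → Fin n → ℤ), m ≤ n ∧ 0 ≤ c ∧
      (∀ t j, |g t j| ≤ Δ) ∧ (∀ i, (∀ t, 0 ≤ (A *ᵥ g t) i) ∨ ∀ t, (A *ᵥ g t) i ≤ 0) ∧
      ∑ t, c t • (Int.cast ∘ g t : Fin n → ℚ) = y := by
  set ε : Fin ℓ → ℤ := fun i => if 0 ≤ (A.map (Int.cast : ℤ → ℚ) *ᵥ y) i then 1 else -1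
  have hε : ∀ i, |ε i| = 1 := fun i => by
    simp only [ε]
    split_ifs <;> simp
  have hy : 0 ≤ (diagonal ε * A).map (Int.cast : ℤ → ℚ) *ᵥ y := fun i => by
    have hrow : ((diagonal ε * A).map (Int.cast : ℤ → ℚ) *ᵥ y) i =
        ε i * (A.map (Int.cast : ℤ → ℚ) *ᵥ y) i := by
      simp [mulVec, dotProduct, Finset.mul_sum, mul_assoc]
    rw [hrow, Pi.zero_apply]
    simp only [ε]
    split_ifs with h <;> push_cast <;> linarith
  obtain ⟨m, c, g, hm, hc, hg, hsum⟩ :=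
    PointedCone.exists_fin_sum_of_mem_hull ((hA.diagonal_mul hε).mem_hull_integral hy)
  choose v hv hvg using hg
  refine ⟨m, c, v, by simpa using hm, hc, fun t => (hv t).2, fun i => ?_, by simpa [hvg] using hsum⟩
  have hsign : ∀ t, 0 ≤ ε i * (A *ᵥ v t) i := fun t => by
    simpa [← mulVec_mulVec, mulVec_diagonal] using (hv t).1 i
  by_cases hi : 0 ≤ (A.map (Int.cast : ℤ → ℚ) *ᵥ y) i
  · exact Or.inl fun t => by simpa [ε, hi] using hsign t
  · exact Or.inr fun t => by simpa [ε, hi] using hsign t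

end SubdetBound

lemma exists_mulVec_le_abs_sub_le {ι κ : Type*} [Fintype κ] (A : Matrix ι κ ℤ) (b : ι → ℤ)
    {z : κ → ℤ} (hz : A *ᵥ z ≤ b) {r : κ → ℚ}
    (hr : A.map (Int.cast : ℤ → ℚ) *ᵥ r ≤ fun i => (b i : ℚ)) {m : ℕ} {c : Fin m → ℚ}
    (hc : 0 ≤ c) {g : Fin m → κ → ℤ}
    (hg : ∀ i, (∀ t, 0 ≤ (A *ᵥ g t) i) ∨ ∀ t, (A *ᵥ g t) i ≤ 0)
    (hsum : ∑ t, c t • (Int.cast ∘ g t : κ → ℚ) = fun j => (z j : ℚ) - r j) :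
    ∃ zstar : κ → ℤ, A *ᵥ zstar ≤ b ∧ ∀ j, |(zstar j : ℚ) - r j| ≤ ∑ t, |(g t j : ℚ)| := by
  set zstar := z - ∑ t, ⌊c t⌋ • g t
  have hfract : (Int.cast ∘ zstar : κ → ℚ) = r + ∑ t, Int.fract (c t) • (Int.cast ∘ g t) := by
    ext j
    have h := congrFun hsum j
    simp only [Finset.sum_apply, Pi.smul_apply, Function.comp_apply, smul_eq_mul] at h
    simp only [zstar, Int.fract, Pi.add_apply, Pi.sub_apply, Finset.sum_apply, Pi.smul_apply,
      Function.comp_apply, smul_eq_mul, sub_mul, Finset.sum_sub_distrib]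
    push_cast
    linarith
  refine ⟨zstar, fun i => ?_, fun j => ?_⟩
  · rcases hg i with h | h
    · calc (A *ᵥ zstar) i = (A *ᵥ z) i - ∑ t, ⌊c t⌋ * (A *ᵥ g t) i := by
            simp only [zstar, mulVec_sub, mulVec_sum, mulVec_smul, Pi.sub_apply, Finset.sum_apply,
              Pi.smul_apply, smul_eq_mul]
        _ ≤ (A *ᵥ z) i := sub_le_self _ (Finset.sum_nonneg fun t _ =>
            mul_nonneg (Int.floor_nonneg.mpr (hc t)) (h t))
        _ ≤ b i := hz i
    · have hcast : ((A *ᵥ zstar) i : ℚ) =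
          (A.map Int.cast *ᵥ r) i + ∑ t, Int.fract (c t) * ((A *ᵥ g t) i : ℚ) := by
        simp [intCast_mulVec_apply, hfract, mulVec_add, mulVec_sum, mulVec_smul,
          Finset.sum_apply]
      have hle : ((A *ᵥ zstar) i : ℚ) ≤ b i := by
        have hnonpos : ∑ t, Int.fract (c t) * ((A *ᵥ g t) i : ℚ) ≤ 0 :=
          Finset.sum_nonpos fun t _ => mul_nonpos_of_nonneg_of_nonpos (Int.fract_nonneg (c t))
            (by exact_mod_cast h t)
        rw [hcast]
        linarith [hr i]
      exact_mod_cast hle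
  · have hj : (zstar j : ℚ) - r j = ∑ t, Int.fract (c t) * (g t j : ℚ) := by
      have h := congrFun hfract j
      simp only [Function.comp_apply, Pi.add_apply, Finset.sum_apply, Pi.smul_apply,
        smul_eq_mul] at h
      linarith
    rw [hj]
    refine (Finset.abs_sum_le_sum_abs _ _).trans (Finset.sum_le_sum fun t _ => ?_)
    rw [abs_mul, abs_of_nonneg (Int.fract_nonneg _)]
    exact mul_le_of_le_one_left (abs_nonneg _) (Int.fract_lt_one _).le

theorem solution_integral_close_general {ℓ n : ℕ}
    (A : Matrix (Fin ℓ) (Fin n) ℤ) (b : Fin ℓ → ℤ) (Δ : ℤ)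
    (hsub : SubdetBound A Δ)
    (z : Fin n → ℤ) (hz : A.mulVec z ≤ b)
    (r : Fin n → ℚ)
    (hr : (A.map (fun a => (a : ℚ))).mulVec r ≤ fun j => (b j : ℚ)) :
    ∃ zstar : Fin n → ℤ,
      A.mulVec zstar ≤ b ∧
      ∀ i, |(zstar i : ℚ) - r i| ≤ (n : ℚ) * (Δ : ℚ) := by
  obtain ⟨m, c, g, hm, hc, hgΔ, hg, hsum⟩ :=
    hsub.exists_conic_decomposition fun j => (z j : ℚ) - r j
  obtain ⟨zstar, hfeas, hclose⟩ := exists_mulVec_le_abs_sub_le A b hz hr hc hg hsum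
  refine ⟨zstar, hfeas, fun j => (hclose j).trans ?_⟩
  calc ∑ t, |(g t j : ℚ)| ≤ ∑ _t : Fin m, (Δ : ℚ) :=
        Finset.sum_le_sum fun t _ => by exact_mod_cast hgΔ t j
    _ = m * Δ := by simp
    _ ≤ n * Δ := by
        gcongr
        exact_mod_cast zero_le_one.trans hsub.one_le

theorem solution_integral_close {ℓ n : ℕ}
    (A : Matrix (Fin ℓ) (Fin n) ℤ) (b : Fin ℓ → ℤ) (Δ : ℤ)
    (hΔ : 1 ≤ Δ) (hsub : SubdetBound A Δ)
    (z : Fin n → ℤ) (hz : A.mulVec z ≤ b)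
    (r : Fin n → ℚ)
    (hr : (A.map (fun a => (a : ℚ))).mulVec r ≤ fun j => (b j : ℚ)) :
    ∃ zstar : Fin n → ℤ,
      A.mulVec zstar ≤ b ∧
      ∀ i, |(zstar i : ℚ) - r i| ≤ (n : ℚ) * (Δ : ℚ) :=
  solution_integral_close_general A b Δ hsub z hz r hr
end

section
/- For every n ≥ 2, every period k ≥ 1 of the set S_n = {a ∈ ℕ : there exists b with 1 < b < 2^n and b divides a} is divisible by every prime p with p < 2^n; consequently, the product of all primes p with p < 2^n divides every period of S_n, and is therefore the smallest period of S_n. -/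
/-- `p` is a period of `S ⊆ ℕ`. -/
def IsPeriodNat (S : Set ℕ) (p : ℕ) : Prop :=
  ∃ n₀ : ℕ, ∀ a : ℕ, n₀ ≤ a → (a + p ∈ S ↔ a ∈ S)

theorem primorial_smallest_period (n : ℕ) (hn : 2 ≤ n) :
    (∀ k : ℕ, 1 ≤ k →
        IsPeriodNat {a : ℕ | ∃ b : ℕ, 1 < b ∧ b < 2 ^ n ∧ b ∣ a} k →
        (∀ p : ℕ, p.Prime → p < 2 ^ n → p ∣ k) ∧
        (∏ p ∈ Finset.filter Nat.Prime (Finset.range (2 ^ n)), p) ∣ k) ∧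
    IsLeast {k : ℕ | 1 ≤ k ∧
        IsPeriodNat {a : ℕ | ∃ b : ℕ, 1 < b ∧ b < 2 ^ n ∧ b ∣ a} k}
      (∏ p ∈ Finset.filter Nat.Prime (Finset.range (2 ^ n)), p) := by
  set S : Set ℕ := {a : ℕ | ∃ b : ℕ, 1 < b ∧ b < 2 ^ n ∧ b ∣ a} with hSdef
  set P : ℕ := ∏ p ∈ Finset.filter Nat.Prime (Finset.range (2 ^ n)), p with hPdef
  have hmem : ∀ a : ℕ, a ∈ S ↔ ∃ q : ℕ, q.Prime ∧ q < 2 ^ n ∧ q ∣ a := by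
    intro a
    constructor
    · rintro ⟨b, hb1, hb2, hb3⟩
      exact ⟨b.minFac, Nat.minFac_prime (by omega),
        lt_of_le_of_lt (Nat.minFac_le (by omega)) hb2, (Nat.minFac_dvd b).trans hb3⟩
    · rintro ⟨q, hq, hq2, hq3⟩
      exact ⟨q, hq.one_lt, hq2, hq3⟩
  have hdvdP : ∀ q : ℕ, q.Prime → q < 2 ^ n → q ∣ P := by
    intro q hq hqlt
    exact Finset.dvd_prod_of_mem _ (by simp [Finset.mem_filter, Finset.mem_range, hq, hqlt])
  have hPpos : 0 < P := Finset.prod_pos (fun q hq => (Finset.mem_filter.mp hq).2.pos)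
  -- key: any period k is divisible by every prime p < 2^n
  have key : ∀ k : ℕ, 1 ≤ k → IsPeriodNat S k → ∀ p : ℕ, p.Prime → p < 2 ^ n → p ∣ k := by
    rintro k hk ⟨n₀, hper⟩ p hp hplt
    by_contra hpk
    set Q : ℕ := ∏ q ∈ (Finset.filter Nat.Prime (Finset.range (2 ^ n))) \ {p}, q with hQdef
    have hQpos : 0 < Q :=
      Finset.prod_pos (fun q hq => ((Finset.mem_sdiff.mp hq).1 |> Finset.mem_filter.mp).2.pos)
    have hcop : Nat.Coprime p Q := by
      apply Nat.Coprime.prod_right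
      intro q hq
      obtain ⟨hq1, hq2⟩ := Finset.mem_sdiff.mp hq
      have hqp : q.Prime := (Finset.mem_filter.mp hq1).2
      have hne : p ≠ q := by
        intro h; exact hq2 (by simp [h])
      exact (Nat.coprime_primes hp hqp).mpr hne
    obtain ⟨a₀, ha₀p, ha₀Q⟩ := Nat.chineseRemainder hcop ((p - k % p) % p) 1
    set a : ℕ := a₀ + p * Q * (n₀ + 1) with hadef
    have han₀ : n₀ ≤ a := by
      have : n₀ + 1 ≤ p * Q * (n₀ + 1) :=
        Nat.le_mul_of_pos_left _ (Nat.mul_pos hp.pos hQpos)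
      omega
    have hap : a % p = (p - k % p) % p := by
      have h1 : a = a₀ + p * (Q * (n₀ + 1)) := by rw [hadef]; ring
      have h2 : a % p = a₀ % p := by
        rw [h1, Nat.add_mul_mod_self_left]
      rw [h2, ha₀p]
      exact Nat.mod_mod_of_dvd _ dvd_rfl
    have haQ : a % Q = 1 % Q := by
      have h1 : a = a₀ + Q * (p * (n₀ + 1)) := by rw [hadef]; ring
      rw [h1, Nat.add_mul_mod_self_left]
      exact ha₀Q
    -- p divides a + k
    have hpak : p ∣ a + k := by
      apply Nat.dvd_of_mod_eq_zero
      have hkp : k % p < p := Nat.mod_lt _ hp.pos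
      rw [Nat.add_mod, hap]
      rcases Nat.eq_zero_or_pos (k % p) with h | h
      · simp [h, Nat.mod_self]
      · have h3 : (p - k % p) % p = p - k % p := Nat.mod_eq_of_lt (by omega)
        rw [h3]
        have h4 : p - k % p + k % p = p := by omega
        simp [h4, Nat.mod_self]
    -- a ∉ S
    have haS : a ∉ S := by
      rw [hmem]
      rintro ⟨q, hq, hqlt, hqa⟩
      by_cases hqp : q = p
      · subst hqp
        exact hpk ((Nat.dvd_add_right hqa).mp hpak)
      · have hqQ : q ∣ Q := Finset.dvd_prod_of_mem _ (by
          simp [Finset.mem_sdiff, Finset.mem_filter, Finset.mem_range, hq, hqlt, hqp])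
        have h1 : a % q = 1 % q := (Nat.ModEq.of_dvd hqQ haQ : a ≡ 1 [MOD q])
        have h2 : a % q = 0 := Nat.mod_eq_zero_of_dvd hqa
        have h3 : 1 % q = 1 := Nat.mod_eq_of_lt hq.one_lt
        omega
    have hakS : a + k ∈ S := (hmem _).mpr ⟨p, hp, hplt, hpak⟩
    exact haS ((hper a han₀).mp hakS)
  -- P is a period
  have hPper : IsPeriodNat S P := by
    refine ⟨0, fun a _ => ?_⟩
    rw [hmem, hmem]
    constructor
    · rintro ⟨q, hq, hqlt, hqa⟩
      refine ⟨q, hq, hqlt, ?_⟩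
      have hqP := hdvdP q hq hqlt
      exact (Nat.dvd_add_right hqP).mp (by rwa [Nat.add_comm] at hqa)
    · rintro ⟨q, hq, hqlt, hqa⟩
      exact ⟨q, hq, hqlt, Dvd.dvd.add hqa (hdvdP q hq hqlt)⟩
  have keyP : ∀ k : ℕ, 1 ≤ k → IsPeriodNat S k → P ∣ k := by
    intro k hk hkper
    refine Finset.prod_primes_dvd k ?_ ?_
    · intro q hq
      exact ((Finset.mem_filter.mp hq).2).prime
    · intro q hq
      obtain ⟨hq1, hq2⟩ := Finset.mem_filter.mp hq
      exact key k hk hkper q hq2 (Finset.mem_range.mp hq1)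
  refine ⟨fun k hk hkper => ⟨key k hk hkper, keyP k hk hkper⟩, ⟨⟨hPpos, hPper⟩, ?_⟩⟩
  rintro k ⟨hk1, hk2⟩
  exact Nat.le_of_dvd hk1 (keyP k hk1 hk2)
end

section
/- For every n ≥ 10, the primorial of 2^n (the product of all primes p ≤ 2^n) is at least 2^(2^n − 1). -/
/-!
Chebyshev's method. The number `T = (30m)! m! / ((15m)! (10m)! (6m)!)` divides
`lcm(1, …, 30m)`: by Legendre's formula its `p`-adic valuation is a sum over
`i ≤ log_p (30m)` of `⌊30t⌋ + ⌊t⌋ - ⌊15t⌋ - ⌊10t⌋ - ⌊6t⌋` with `t = m / p^i`, and this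
expression is at most `1`. Writing `T = C(30m, 15m) C(15m, 10m) / C(6m, 5m)` and comparing each
binomial coefficient with the largest term of the binomial expansion of `2^(30m)`, `3^(15m)` and
`6^(6m)` gives `T ≥ 2^(30m) 3^(15m) 5^(5m) / (poly(m) 2^(10m) 6^(6m)) ≈ 2^(39.9 m)`.
A prime `p ≤ x` divides `lcm(1, …, x)` to the power `⌊log_p x⌋`, which is `1` unless `p ≤ √x`,
so `x#` loses at most a factor `x^π(√x) = 2^O(√x log x)` against `lcm(1, …, x)`.
With `x = 30m` this leaves `x# ≥ 2^(x + 30)`, hence `2^N ≤ N#` for all `N ≥ 900`.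
-/

open Nat Finset
open scoped Nat.Prime

theorem choose_mul_pow_le_add_one_pow (n k b : ℕ) : n.choose k * b ^ k ≤ (b + 1) ^ n := by
  rcases le_or_gt k n with hk | hk
  · calc n.choose k * b ^ k = b ^ k * 1 ^ (n - k) * n.choose k := by
          rw [one_pow, mul_one, mul_comm]
      _ ≤ (b + 1) ^ n := by
        rw [add_pow]
        exact single_le_sum (f := fun j => b ^ j * 1 ^ (n - j) * n.choose j)
          (fun _ _ => Nat.zero_le _) (mem_range.mpr (Nat.lt_succ_of_le hk))
  · simp [choose_eq_zero_of_lt hk]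

theorem choose_mul_pow_le_of_succ_mul_eq {n k b : ℕ} (hk : (b + 1) * k = b * n) (j : ℕ) :
    n.choose j * b ^ j ≤ n.choose k * b ^ k := by
  set t : ℕ → ℕ := fun j => n.choose j * b ^ j with ht
  have step (j : ℕ) : t (j + 1) * (j + 1) = t j * ((n - j) * b) := by
    simp only [ht, pow_succ]
    linear_combination b ^ j * b * choose_succ_right_eq n j
  have up (j : ℕ) (hj : j < k) : t j ≤ t (j + 1) := by
    have : j + 1 ≤ (n - j) * b := by
      have : j ≤ n := by nlinarith
      zify [this]; nlinarith
    exact le_of_mul_le_mul_right ((Nat.mul_le_mul_left _ this).trans (step j).ge) j.succ_pos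
  have down (j : ℕ) (hj : k ≤ j) : t (j + 1) ≤ t j := by
    have : (n - j) * b ≤ j + 1 := by
      rcases le_total j n with h | h
      · zify [h]; nlinarith
      · simp [Nat.sub_eq_zero_of_le h]
    exact le_of_mul_le_mul_right ((step j).le.trans (Nat.mul_le_mul_left _ this)) j.succ_pos
  rcases le_total j k with hj | hj
  · exact monotoneOn_of_le_add_one Set.ordConnected_Iic
      (fun a _ _ ha => up a (Order.add_one_le_iff.mp ha)) hj (le_refl k) hj
  · exact antitoneOn_of_add_one_le Set.ordConnected_Ici
      (fun a _ ha _ => down a ha) (le_refl k) hj hj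

theorem add_one_pow_le_mul_choose_mul_pow {n k b : ℕ} (hk : (b + 1) * k = b * n) :
    (b + 1) ^ n ≤ (n + 1) * n.choose k * b ^ k := by
  rw [add_pow, mul_assoc]
  calc ∑ j ∈ range (n + 1), b ^ j * 1 ^ (n - j) * n.choose j
      ≤ #(range (n + 1)) • (n.choose k * b ^ k) := sum_le_card_nsmul _ _ _ fun j _ => by
        simpa [mul_comm] using choose_mul_pow_le_of_succ_mul_eq hk j
    _ = (n + 1) * (n.choose k * b ^ k) := by simp

theorem thirty_mul_div_add_div_le (M q : ℕ) :
    30 * M / q + M / q ≤ 15 * M / q + 10 * M / q + 6 * M / q + 1 := by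
  have coarsen (c d : ℕ) (hd : 0 < d) : c * M / q = d * c * M / q / d := by
    rw [Nat.div_div_eq_div_mul, mul_comm q d, mul_assoc, Nat.mul_div_mul_left _ _ hd]
  rw [coarsen 15 2 (by norm_num), coarsen 10 3 (by norm_num), coarsen 6 5 (by norm_num),
    ← one_mul M, coarsen 1 30 (by norm_num)]
  norm_num
  omega

theorem factorial_mul_factorial_dvd_mul_lcmUpto (m : ℕ) :
    (30 * m)! * m ! ∣ (15 * m)! * (10 * m)! * (6 * m)! * lcmUpto (30 * m) := by
  rw [← factorization_prime_le_iff_dvd (by positivity)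
    (mul_ne_zero (by positivity) (lcmUpto_ne_zero _))]
  intro p hp
  set b := p.log (30 * m) + 1
  have hlog {k : ℕ} (hk : k ≤ 30 * m) : p.log k < b := Nat.lt_succ_of_le (Nat.log_mono_right hk)
  simp only [ne_eq, mul_eq_zero, factorial_ne_zero, lcmUpto_ne_zero, or_self, not_false_eq_true,
    Nat.factorization_mul, Finsupp.add_apply]
  rw [factorization_lcmUpto _ hp, factorization_factorial hp (hlog le_rfl),
    factorization_factorial hp (hlog (by omega : m ≤ 30 * m)),
    factorization_factorial hp (hlog (by omega : 15 * m ≤ 30 * m)),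
    factorization_factorial hp (hlog (by omega : 10 * m ≤ 30 * m)),
    factorization_factorial hp (hlog (by omega : 6 * m ≤ 30 * m))]
  calc ∑ i ∈ Ico 1 b, 30 * m / p ^ i + ∑ i ∈ Ico 1 b, m / p ^ i
      ≤ ∑ i ∈ Ico 1 b, (15 * m / p ^ i + 10 * m / p ^ i + 6 * m / p ^ i + 1) := by
        rw [← sum_add_distrib]
        exact sum_le_sum fun i _ => thirty_mul_div_add_div_le m (p ^ i)
    _ = _ := by simp [b, sum_add_distrib]

theorem choose_mul_choose_mul_factorial_eq (m : ℕ) :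
    (30 * m).choose (15 * m) * (15 * m).choose (10 * m) * ((15 * m)! * (10 * m)! * (6 * m)!) =
      (6 * m).choose (5 * m) * ((30 * m)! * m !) := by
  have h30 := choose_mul_factorial_mul_factorial (show 15 * m ≤ 30 * m by omega)
  have h15 := choose_mul_factorial_mul_factorial (show 10 * m ≤ 15 * m by omega)
  have h6 := choose_mul_factorial_mul_factorial (show 5 * m ≤ 6 * m by omega)
  rw [show 30 * m - 15 * m = 15 * m by omega] at h30
  rw [show 15 * m - 10 * m = 5 * m by omega] at h15
  rw [show 6 * m - 5 * m = m by omega] at h6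
  apply Nat.eq_of_mul_eq_mul_right (factorial_pos (5 * m))
  linear_combination
    (30 * m).choose (15 * m) * (15 * m)! * (6 * m)! * h15 + (6 * m)! * h30 - (30 * m)! * h6

theorem choose_mul_choose_le_choose_mul_lcmUpto (m : ℕ) :
    (30 * m).choose (15 * m) * (15 * m).choose (10 * m) ≤
      (6 * m).choose (5 * m) * lcmUpto (30 * m) := by
  have hdvd := factorial_mul_factorial_dvd_mul_lcmUpto m
  refine le_of_mul_le_mul_right (a := (15 * m)! * (10 * m)! * (6 * m)!) ?_ (by positivity)
  calc _ = (6 * m).choose (5 * m) * ((30 * m)! * m !) := choose_mul_choose_mul_factorial_eq m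
    _ ≤ (6 * m).choose (5 * m) * ((15 * m)! * (10 * m)! * (6 * m)! * lcmUpto (30 * m)) :=
      Nat.mul_le_mul_left _ (le_of_dvd (mul_pos (by positivity) (lcmUpto_pos _)) hdvd)
    _ = _ := by ring

theorem two_three_five_pow_le_mul_lcmUpto (m : ℕ) :
    2 ^ (30 * m) * 3 ^ (15 * m) * 5 ^ (5 * m) ≤
      (30 * m + 1) * (15 * m + 1) * 2 ^ (10 * m) * 6 ^ (6 * m) * lcmUpto (30 * m) := by
  have h30 := add_one_pow_le_mul_choose_mul_pow (b := 1) (n := 30 * m) (k := 15 * m) (by ring)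
  have h15 := add_one_pow_le_mul_choose_mul_pow (b := 2) (n := 15 * m) (k := 10 * m) (by ring)
  have h6 := choose_mul_pow_le_add_one_pow (6 * m) (5 * m) 5
  have hlcm := choose_mul_choose_le_choose_mul_lcmUpto m
  norm_num at h30 h15 h6
  set A := (30 * m).choose (15 * m)
  set B := (15 * m).choose (10 * m)
  set C := (6 * m).choose (5 * m)
  calc 2 ^ (30 * m) * 3 ^ (15 * m) * 5 ^ (5 * m)
      ≤ ((30 * m + 1) * A) * ((15 * m + 1) * B * 2 ^ (10 * m)) * 5 ^ (5 * m) := by gcongr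
    _ = (30 * m + 1) * (15 * m + 1) * 2 ^ (10 * m) * (A * B) * 5 ^ (5 * m) := by ring
    _ ≤ (30 * m + 1) * (15 * m + 1) * 2 ^ (10 * m) * (C * lcmUpto (30 * m)) * 5 ^ (5 * m) := by
        gcongr
    _ = (30 * m + 1) * (15 * m + 1) * 2 ^ (10 * m) * (C * 5 ^ (5 * m)) * lcmUpto (30 * m) := by
        ring
    _ ≤ _ := by gcongr

theorem primeCounting_le_div_two_add_one (z : ℕ) : π z ≤ z / 2 + 1 := by
  rcases lt_or_ge z 2 with hz | hz
  · interval_cases z <;> decide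
  · have := primeCounting_add_le two_ne_zero le_rfl (z - 2)
    rw [Nat.add_sub_cancel' hz, show π 2 = 1 by decide, totient_two] at this
    omega

theorem lcmUpto_le_primorial_mul_pow_primeCounting_sqrt (x : ℕ) :
    lcmUpto x ≤ primorial x * x ^ π (sqrt x) := by
  have hsmall : {p ∈ primesLE x | p * p ≤ x} = primesLE (sqrt x) := by
    ext p
    simp only [mem_filter, mem_primesLE, le_sqrt]
    constructor
    · rintro ⟨⟨-, hp⟩, hpp⟩; exact ⟨hpp, hp⟩
    · rintro ⟨hpp, hp⟩; exact ⟨⟨le_trans (Nat.le_mul_self p) hpp, hp⟩, hpp⟩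
  have hterm (p : ℕ) (hp : p ∈ primesLE x) :
      p ^ p.log x ≤ p * if p * p ≤ x then x else 1 := by
    have hp1 := one_lt_of_mem_primesLE hp
    have hx : x ≠ 0 := by have := le_of_mem_primesLE hp; omega
    split_ifs with hpx
    · exact (pow_log_le_self p hx).trans (Nat.le_mul_of_pos_left x (by omega))
    · have : p.log x < 2 := log_lt_of_lt_pow hx (by nlinarith)
      calc p ^ p.log x ≤ p ^ 1 := Nat.pow_le_pow_right (by omega) (by omega)
        _ = p * 1 := by ring
  calc lcmUpto x = ∏ p ∈ primesLE x, p ^ p.log x := lcmUpto_eq_prod_pow_log x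
    _ ≤ ∏ p ∈ primesLE x, p * if p * p ≤ x then x else 1 := prod_le_prod' hterm
    _ = primorial x * x ^ π (sqrt x) := by
      rw [prod_mul_distrib, ← prod_filter, prod_const, hsmall, primesLE_card_eq_primeCounting,
        primorial_eq_prod_primesLE]

theorem add_one_le_two_pow_div_five {z : ℕ} (hz : 25 ≤ z) : z + 1 ≤ 2 ^ (z / 5) := by
  have key : ∀ k ≥ 5, 5 * k + 5 ≤ 2 ^ k := fun k hk => by
    induction k, hk using Nat.le_induction with
    | base => norm_num
    | succ k _ ih => rw [pow_succ]; omega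
  have := key (z / 5) (by omega)
  omega

theorem pow_sqrt_div_two_add_three_le {x : ℕ} (hx : 625 ≤ x) :
    x ^ (sqrt x / 2 + 3) ≤ 2 ^ (4 * x / 15) := by
  set z := sqrt x
  have hz : 25 ≤ z := le_sqrt.mpr hx
  have hzx : z * z ≤ x := sqrt_le x
  have hxz : x ≤ (z + 1) ^ 2 := (lt_succ_sqrt' x).le
  have hexp : z / 5 * (z + 6) ≤ 4 * x / 15 := by
    rw [Nat.le_div_iff_mul_le (by norm_num)]
    have : 5 * (z / 5) ≤ z := Nat.mul_div_le z 5
    nlinarith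
  calc x ^ (z / 2 + 3) ≤ ((z + 1) ^ 2) ^ (z / 2 + 3) := Nat.pow_le_pow_left hxz _
    _ = (z + 1) ^ (2 * (z / 2) + 6) := by rw [← pow_mul]; ring_nf
    _ ≤ (z + 1) ^ (z + 6) := Nat.pow_le_pow_right (by omega) (by omega)
    _ ≤ (2 ^ (z / 5)) ^ (z + 6) := Nat.pow_le_pow_left (add_one_le_two_pow_div_five hz) _
    _ = 2 ^ (z / 5 * (z + 6)) := by rw [← pow_mul]
    _ ≤ 2 ^ (4 * x / 15) := Nat.pow_le_pow_right (by norm_num) hexp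

theorem two_pow_mul_le_two_three_five_pow {m : ℕ} (hm : 30 ≤ m) :
    2 ^ (30 * m + 30) * ((30 * m + 1) * (15 * m + 1) * 2 ^ (10 * m) * 6 ^ (6 * m) *
        (30 * m) ^ π (sqrt (30 * m))) ≤
      2 ^ (30 * m) * 3 ^ (15 * m) * 5 ^ (5 * m) := by
  set x := 30 * m with hx
  have hpoly : (x + 1) * (15 * m + 1) * x ^ π (sqrt x) ≤ 2 ^ (8 * m) :=
    calc (x + 1) * (15 * m + 1) * x ^ π (sqrt x) ≤ x ^ 2 * x ^ (sqrt x / 2 + 1) := by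
          gcongr
          · nlinarith [hx]
          · omega
          · exact primeCounting_le_div_two_add_one _
      _ = x ^ (sqrt x / 2 + 3) := by ring
      _ ≤ 2 ^ (4 * x / 15) := pow_sqrt_div_two_add_three_le (by omega)
      _ = 2 ^ (8 * m) := by congr 1; omega
  have h6 : 6 ^ (6 * m) ≤ 2 ^ (16 * m) := by
    rw [pow_mul, pow_mul]; exact Nat.pow_le_pow_left (by norm_num) m
  have h35 : 2 ^ (35 * m) ≤ 3 ^ (15 * m) * 5 ^ (5 * m) := by
    rw [pow_mul, pow_mul, pow_mul, ← mul_pow]; exact Nat.pow_le_pow_left (by norm_num) m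
  calc 2 ^ (x + 30) * ((x + 1) * (15 * m + 1) * 2 ^ (10 * m) * 6 ^ (6 * m) * x ^ π (sqrt x))
      = 2 ^ (x + 30) * 2 ^ (10 * m) * 6 ^ (6 * m) *
          ((x + 1) * (15 * m + 1) * x ^ π (sqrt x)) := by ring
    _ ≤ 2 ^ (x + 30) * 2 ^ (10 * m) * 2 ^ (16 * m) * 2 ^ (8 * m) := by gcongr
    _ = 2 ^ (64 * m + 30) := by rw [← pow_add, ← pow_add, ← pow_add]; congr 1; omega
    _ ≤ 2 ^ (30 * m) * 2 ^ (35 * m) := by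
        rw [← pow_add]; exact Nat.pow_le_pow_right two_pos (by omega)
    _ ≤ 2 ^ (30 * m) * 3 ^ (15 * m) * 5 ^ (5 * m) := by rw [mul_assoc]; gcongr

theorem two_pow_add_thirty_le_primorial_thirty_mul {m : ℕ} (hm : 30 ≤ m) :
    2 ^ (30 * m + 30) ≤ primorial (30 * m) := by
  set x := 30 * m
  have hoverhead : 0 < (x + 1) * (15 * m + 1) * 2 ^ (10 * m) * 6 ^ (6 * m) * x ^ π (sqrt x) := by
    positivity
  refine le_of_mul_le_mul_right ((two_pow_mul_le_two_three_five_pow hm).trans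
    ((two_three_five_pow_le_mul_lcmUpto m).trans ?_)) hoverhead
  calc _ ≤ (x + 1) * (15 * m + 1) * 2 ^ (10 * m) * 6 ^ (6 * m) *
          (primorial x * x ^ π (sqrt x)) :=
        Nat.mul_le_mul_left _ (lcmUpto_le_primorial_mul_pow_primeCounting_sqrt x)
    _ = _ := by ring

theorem two_pow_le_primorial {N : ℕ} (hN : 900 ≤ N) : 2 ^ N ≤ primorial N :=
  calc 2 ^ N ≤ 2 ^ (30 * (N / 30) + 30) := Nat.pow_le_pow_right two_pos (by omega)
    _ ≤ primorial (30 * (N / 30)) := two_pow_add_thirty_le_primorial_thirty_mul (by omega)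
    _ ≤ primorial N := primorial_mono (Nat.mul_div_le N 30)

theorem primorial_lower_bound (n : ℕ) (hn : 10 ≤ n) :
    2 ^ (2 ^ n - 1) ≤
      ∏ p ∈ Finset.filter Nat.Prime (Finset.range (2 ^ n + 1)), p :=
  calc 2 ^ (2 ^ n - 1) ≤ 2 ^ 2 ^ n := Nat.pow_le_pow_right two_pos (Nat.sub_le _ _)
    _ ≤ primorial (2 ^ n) := two_pow_le_primorial <|
      (show 900 ≤ 2 ^ 10 by norm_num).trans (Nat.pow_le_pow_right two_pos hn)
end

section
/- Let m ∈ ℕ and let Γ be any predicate on ℤ^m. Define the binary relation R on ℤ × ℤ^m by: R((x, u), (y, v)) holds if and only if (x < 0 ∧ y < 0) ∨ (x > 0 ∧ y > 0) ∨ (x < 0 ∧ y = 0) ∨ (x = 0 ∧ y > 0) ∨ (x = 0 ∧ y = 0) ∨ (x < 0 ∧ y > 0 ∧ Γ(v)). Then R is a well-quasi-ordering (i.e., R is reflexive, transitive, and for every infinite sequence a₁, a₂, … of elements of ℤ × ℤ^m there exist indices i < j with R(aᵢ, aⱼ)) if and only if Γ(w) holds for every w ∈ ℤ^m. -/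
/-- The relation from the WQO-detection lower bound. -/
def wqoRel (m : ℕ) (Γ : (Fin m → ℤ) → Prop) :
    (ℤ × (Fin m → ℤ)) → (ℤ × (Fin m → ℤ)) → Prop :=
  fun a c =>
    (a.1 < 0 ∧ c.1 < 0) ∨ (a.1 > 0 ∧ c.1 > 0) ∨ (a.1 < 0 ∧ c.1 = 0) ∨
    (a.1 = 0 ∧ c.1 > 0) ∨ (a.1 = 0 ∧ c.1 = 0) ∨
    (a.1 < 0 ∧ c.1 > 0 ∧ Γ c.2)

theorem wqo_iff_gamma (m : ℕ) (Γ : (Fin m → ℤ) → Prop) :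
    (Reflexive (wqoRel m Γ) ∧ Transitive (wqoRel m Γ) ∧
      ∀ a : ℕ → ℤ × (Fin m → ℤ), ∃ i j : ℕ, i < j ∧ wqoRel m Γ (a i) (a j)) ↔
    (∀ w : Fin m → ℤ, Γ w) := by
  constructor
  · rintro ⟨-, htrans, -⟩ w
    have h1 : wqoRel m Γ (-1, w) (0, w) := by
      unfold wqoRel; exact Or.inr (Or.inr (Or.inl ⟨by norm_num, rfl⟩))
    have h2 : wqoRel m Γ (0, w) (1, w) := by
      unfold wqoRel; exact Or.inr (Or.inr (Or.inr (Or.inl ⟨rfl, by norm_num⟩)))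
    have h3 := htrans h1 h2
    unfold wqoRel at h3
    simp only at h3
    rcases h3 with ⟨_, h⟩ | ⟨h, _⟩ | ⟨_, h⟩ | ⟨h, _⟩ | ⟨h, _⟩ | ⟨_, _, h⟩ <;>
      first | exact h | omega
  · intro hΓ
    have key : ∀ a c : ℤ × (Fin m → ℤ), wqoRel m Γ a c ↔
        (a.1 < 0 ∨ (a.1 = 0 ∧ 0 ≤ c.1) ∨ (a.1 > 0 ∧ c.1 > 0)) := by
      intro a c
      unfold wqoRel
      constructor
      · rintro (⟨h1, h2⟩ | ⟨h1, h2⟩ | ⟨h1, h2⟩ | ⟨h1, h2⟩ | ⟨h1, h2⟩ | ⟨h1, h2, h3⟩) <;> omega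
      · rintro (h | ⟨h1, h2⟩ | ⟨h1, h2⟩)
        · rcases lt_trichotomy c.1 0 with hc | hc | hc
          · exact Or.inl ⟨h, hc⟩
          · exact Or.inr (Or.inr (Or.inl ⟨h, hc⟩))
          · exact Or.inr (Or.inr (Or.inr (Or.inr (Or.inr ⟨h, hc, hΓ c.2⟩))))
        · rcases eq_or_lt_of_le h2 with hc | hc
          · exact Or.inr (Or.inr (Or.inr (Or.inr (Or.inl ⟨h1, hc.symm⟩))))
          · exact Or.inr (Or.inr (Or.inr (Or.inl ⟨h1, hc⟩)))
        · exact Or.inr (Or.inl ⟨h1, h2⟩)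
    refine ⟨fun a => (key a a).2 (by omega), fun a b c hab hbc => ?_, fun a => ?_⟩
    · rw [key] at hab hbc ⊢; omega
    · by_cases h0 : (a 0).1 < 0
      · exact ⟨0, 1, by omega, (key _ _).2 (Or.inl h0)⟩
      by_cases h1 : (a 1).1 < 0
      · exact ⟨1, 2, by omega, (key _ _).2 (Or.inl h1)⟩
      by_cases h2 : (a 2).1 < 0
      · exact ⟨2, 3, by omega, (key _ _).2 (Or.inl h2)⟩
      push_neg at h0 h1 h2
      rcases eq_or_lt_of_le h0 with e0 | e0
      · exact ⟨0, 1, by omega, (key _ _).2 (Or.inr (Or.inl ⟨e0.symm, h1⟩))⟩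
      rcases eq_or_lt_of_le h1 with e1 | e1
      · exact ⟨1, 2, by omega, (key _ _).2 (Or.inr (Or.inl ⟨e1.symm, h2⟩))⟩
      exact ⟨0, 1, by omega, (key _ _).2 (Or.inr (Or.inr ⟨e0, e1⟩))⟩
end

section
/- For every n ≥ 2, the least common multiple L of the numbers 1, 2, …, 2^n − 1 is a period of the set S'_n = {a ∈ ℕ : there exists b with 1 < b < 2^n such that b does not divide a}, and every period k ≥ 1 of S'_n is divisible by L; hence L is the smallest period of S'_n. -/
/-!
`a` fails to be divisible by some `1 < b < M` exactly when it is not a multiple of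
`L = lcm(1, …, M - 1)`, so `S'_n` is the set of non-multiples of `L`. For that set, `L` is a
period from the start, and if `k` is an eventual period then, starting from a large multiple `a`
of `L`, the point `a + k` must again be a multiple of `L`, whence `L ∣ k`.
-/

theorem setOf_exists_not_dvd_eq (M : ℕ) :
    {a : ℕ | ∃ b : ℕ, 1 < b ∧ b < M ∧ ¬ b ∣ a} =
      {a | ¬ (Finset.Icc 1 (M - 1)).lcm id ∣ a} := by
  ext a
  simp only [Set.mem_ofPred_eq, Finset.lcm_dvd_iff, Finset.mem_Icc, id]
  constructor
  · rintro ⟨b, hb1, hbM, hba⟩ hdvd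
    exact hba (hdvd b ⟨hb1.le, by omega⟩)
  · intro hndvd
    push Not at hndvd
    obtain ⟨b, ⟨hb1, hbM⟩, hba⟩ := hndvd
    have hb_ne_one : b ≠ 1 := by rintro rfl; exact hba (one_dvd a)
    exact ⟨b, by omega, by omega, hba⟩

theorem lcm_Icc_one_ne_zero (N : ℕ) : (Finset.Icc 1 N).lcm id ≠ 0 :=
  Finset.lcm_ne_zero_iff.mpr fun _ hb => Nat.one_le_iff_ne_zero.mp (Finset.mem_Icc.mp hb).1

theorem isPeriodNat_setOf_not_dvd_iff {L : ℕ} (hL : L ≠ 0) (k : ℕ) :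
    IsPeriodNat {a | ¬ L ∣ a} k ↔ L ∣ k := by
  constructor
  · rintro ⟨n₀, hperiod⟩
    have hmul : L ∣ L * n₀ := dvd_mul_right L n₀
    have hle : n₀ ≤ L * n₀ := Nat.le_mul_of_pos_left n₀ (Nat.pos_of_ne_zero hL)
    have hshift : L ∣ L * n₀ + k := by
      simpa only [Set.mem_ofPred_eq, hmul, not_true, iff_false, not_not]
        using hperiod (L * n₀) hle
    exact (Nat.dvd_add_right hmul).mp hshift
  · exact fun hk => ⟨0, fun a _ => not_congr (Nat.dvd_add_left hk)⟩

theorem lcm_smallest_period_general (n : ℕ) :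
    IsPeriodNat {a : ℕ | ∃ b : ℕ, 1 < b ∧ b < 2 ^ n ∧ ¬ b ∣ a}
      ((Finset.Icc 1 (2 ^ n - 1)).lcm id) ∧
    (∀ k : ℕ, 1 ≤ k →
      IsPeriodNat {a : ℕ | ∃ b : ℕ, 1 < b ∧ b < 2 ^ n ∧ ¬ b ∣ a} k →
      (Finset.Icc 1 (2 ^ n - 1)).lcm id ∣ k) ∧
    IsLeast {k : ℕ | 1 ≤ k ∧
        IsPeriodNat {a : ℕ | ∃ b : ℕ, 1 < b ∧ b < 2 ^ n ∧ ¬ b ∣ a} k}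
      ((Finset.Icc 1 (2 ^ n - 1)).lcm id) := by
  have hL := lcm_Icc_one_ne_zero (2 ^ n - 1)
  have hperiod_iff := isPeriodNat_setOf_not_dvd_iff hL
  rw [setOf_exists_not_dvd_eq]
  have hperiod := (hperiod_iff _).mpr dvd_rfl
  refine ⟨hperiod, fun k _ hk => (hperiod_iff k).mp hk,
    ⟨Nat.one_le_iff_ne_zero.mpr hL, hperiod⟩, ?_⟩
  rintro k ⟨hk, hkperiod⟩
  exact Nat.le_of_dvd hk ((hperiod_iff k).mp hkperiod)

theorem lcm_smallest_period (n : ℕ) (hn : 2 ≤ n) :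
    IsPeriodNat {a : ℕ | ∃ b : ℕ, 1 < b ∧ b < 2 ^ n ∧ ¬ b ∣ a}
      ((Finset.Icc 1 (2 ^ n - 1)).lcm id) ∧
    (∀ k : ℕ, 1 ≤ k →
      IsPeriodNat {a : ℕ | ∃ b : ℕ, 1 < b ∧ b < 2 ^ n ∧ ¬ b ∣ a} k →
      (Finset.Icc 1 (2 ^ n - 1)).lcm id ∣ k) ∧
    IsLeast {k : ℕ | 1 ≤ k ∧
        IsPeriodNat {a : ℕ | ∃ b : ℕ, 1 < b ∧ b < 2 ^ n ∧ ¬ b ∣ a} k}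
      ((Finset.Icc 1 (2 ^ n - 1)).lcm id) :=
  lcm_smallest_period_general n
end
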